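/- arXiv:1705.07978 — 7 statements merged into one kernel-verified Lean document; each statement's English description precedes it below -/
import Mathlib

section
/- Let α₀ < α₁ be real numbers and M > 0. Let (f_n)_{n≥0} be a sequence of differentiable, nondecreasing functions f_n : [α₀, α₁] → [0, M] that converges pointwise to a function f, with f_0(x) > 0 for all x ∈ [α₀, α₁]. Set Σ_n := Σ_{k=0}^{n-1} f_k, and assume f_n'(x) ≥ (n / Σ_n(x)) · f_n(x) for all n ≥ 1 and all x ∈ [α₀, α₁]. Then there exists β₁ ∈ [α₀, α₁] such that: (i) for every β < β₁ (with β ∈ [α₀, α₁]) there exists c_β > 0 such that f_n(β) ≤ M·exp(−c_β·n) for all sufficiently large n; (ii) for every β > β₁ (with β ∈ [α₀, α₁]), f(β) ≥ β − β₁. -/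
open Filter Real Topology Finset

/-!
Write `Σ_n = ∑_{k<n} f_k`. For `x ≤ y`, integrating `f_n' ≥ (n / Σ_n(y)) f_n` over `[x, y]` gives
`f_n(x) ≤ f_n(y) exp (-n (y - x) / Σ_n(y))`. Since `f_{k+1} / Σ_{k+1} ≥ log (Σ_{k+2} / Σ_{k+1})`
telescopes, `∑_{k<N} f_{k+1}' / (k + 1) ≥ log (Σ_{N+1} / f_0) ≥ log (Σ_N(x) / M)` on `[x, y]`, and
integrating gives
`(y - x) log (Σ_N(x) / M) ≤ ∑_{k<N} (f_{k+1}(y) - f_{k+1}(x)) / (k + 1) = (F y - F x + o(1)) log N`.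

Let `β₁` be the supremum of the zeros of `F`. Left of a zero of `F` the second estimate gives
`Σ_N ≤ M √N`, so by the first `f_n ≤ M exp (-c √n)` slightly further left; there `Σ_n` stays
bounded and the first estimate yields exponential decay. Right of `β₁` we have `F t > 0`, so
`Σ_N(t) ≥ c N` and the second estimate forces `β - t ≤ F β - F t`.
-/

theorem Convex.monotoneOn_of_hasDerivWithinAt_nonneg {D : Set ℝ} (hD : Convex ℝ D)
    {g g' : ℝ → ℝ} (hg : ∀ t ∈ D, HasDerivWithinAt g (g' t) D t) (hg' : ∀ t ∈ D, 0 ≤ g' t) :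
    MonotoneOn g D :=
  _root_.monotoneOn_of_hasDerivWithinAt_nonneg hD (fun t ht => (hg t ht).continuousWithinAt)
    (fun t ht => (hg t (interior_subset ht)).mono interior_subset)
    (fun t ht => hg' t (interior_subset ht))

theorem mul_sub_le_sub_of_le_hasDerivWithinAt {g g' : ℝ → ℝ} {C x y : ℝ} (hxy : x ≤ y)
    (hg : ∀ t ∈ Set.Icc x y, HasDerivWithinAt g (g' t) (Set.Icc x y) t)
    (hC : ∀ t ∈ Set.Icc x y, C ≤ g' t) :
    C * (y - x) ≤ g y - g x := by
  have hmono : MonotoneOn (fun t => g t - C * t) (Set.Icc x y) :=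
    (convex_Icc x y).monotoneOn_of_hasDerivWithinAt_nonneg
      (fun t ht => (hg t ht).sub (by simpa using (hasDerivWithinAt_id t _).const_mul C))
      (fun t ht => sub_nonneg.2 (hC t ht))
  have := hmono (Set.left_mem_Icc.2 hxy) (Set.right_mem_Icc.2 hxy) hxy
  linarith

theorem le_mul_exp_neg_of_mul_le_hasDerivWithinAt {g g' : ℝ → ℝ} {c x y : ℝ} (hxy : x ≤ y)
    (hg : ∀ t ∈ Set.Icc x y, HasDerivWithinAt g (g' t) (Set.Icc x y) t)
    (hc : ∀ t ∈ Set.Icc x y, c * g t ≤ g' t) :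
    g x ≤ g y * exp (-(c * (y - x))) := by
  have hexp (t : ℝ) : HasDerivAt (fun u => exp (-(c * u))) (exp (-(c * t)) * -c) t := by
    simpa using ((hasDerivAt_id t).const_mul c).neg.exp
  have hmono : MonotoneOn (fun t => g t * exp (-(c * t))) (Set.Icc x y) :=
    (convex_Icc x y).monotoneOn_of_hasDerivWithinAt_nonneg
      (fun t ht => (hg t ht).mul (hexp t).hasDerivWithinAt)
      (fun t ht => by nlinarith [hc t ht, exp_pos (-(c * t))])
  have := hmono (Set.left_mem_Icc.2 hxy) (Set.right_mem_Icc.2 hxy) hxy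
  refine le_of_mul_le_mul_right ?_ (exp_pos (-(c * x)))
  calc g x * exp (-(c * x)) ≤ g y * exp (-(c * y)) := this
    _ = g y * exp (-(c * (y - x))) * exp (-(c * x)) := by rw [mul_assoc, ← exp_add]; ring_nf

theorem log_sum_range_succ_div_le (a : ℕ → ℝ) (h0 : 0 < a 0) (ha : ∀ k, 0 ≤ a k) (N : ℕ) :
    log ((∑ k ∈ range (N + 1), a k) / a 0) ≤
      ∑ k ∈ range N, a (k + 1) / ∑ j ∈ range (k + 1), a j := by
  induction N with
  | zero => simp [h0.ne']
  | succ N ih =>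
    have hpos : 0 < ∑ j ∈ range (N + 1), a j :=
      h0.trans_le (single_le_sum (fun j _ => ha j) (mem_range.2 N.succ_pos))
    have hpos' : 0 < ∑ j ∈ range (N + 2), a j := by
      rw [sum_range_succ a (N + 1)]; linarith [ha (N + 1)]
    have hstep : log ((∑ k ∈ range (N + 2), a k) / ∑ j ∈ range (N + 1), a j) ≤
        a (N + 1) / ∑ j ∈ range (N + 1), a j := by
      refine (log_le_sub_one_of_pos (div_pos hpos' hpos)).trans_eq ?_
      rw [sum_range_succ a (N + 1)]
      field_simp
      ring
    rw [sum_range_succ _ N]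
    calc log ((∑ k ∈ range (N + 2), a k) / a 0)
        = log ((∑ k ∈ range (N + 1), a k) / a 0) +
          log ((∑ k ∈ range (N + 2), a k) / ∑ j ∈ range (N + 1), a j) := by
          rw [← log_mul (div_pos hpos h0).ne' (div_pos hpos' hpos).ne']
          congr 1
          field_simp
      _ ≤ _ := add_le_add ih hstep

theorem eventually_sum_div_succ_le_mul_log {g : ℕ → ℝ} {L c : ℝ}
    (hg : Tendsto g atTop (𝓝 L)) (hL : 0 ≤ L) (hLc : L < c) :
    ∀ᶠ N : ℕ in atTop, ∑ k ∈ range N, g (k + 1) / (k + 1) ≤ c * log N := by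
  obtain ⟨μ, hLμ, hμc⟩ := exists_between hLc
  obtain ⟨n₀, hn₀⟩ := eventually_atTop.1 (hg.eventually (ge_mem_nhds hLμ))
  set C := ∑ k ∈ range n₀, (g (k + 1) - μ) / (k + 1)
  have hlog : Tendsto (fun N : ℕ => (c - μ) * log N) atTop atTop :=
    (tendsto_log_atTop.comp tendsto_natCast_atTop_atTop).const_mul_atTop (by linarith)
  filter_upwards [eventually_ge_atTop n₀, hlog.eventually_ge_atTop (C + μ)] with N hN hNlarge
  have htail : ∑ k ∈ range N, (g (k + 1) - μ) / (k + 1) ≤ C := by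
    rw [← sum_range_add_sum_Ico _ hN]
    have : ∑ k ∈ Ico n₀ N, (g (k + 1) - μ) / (k + 1) ≤ 0 :=
      sum_nonpos fun k hk => div_nonpos_of_nonpos_of_nonneg
        (by linarith [hn₀ (k + 1) (by linarith [(mem_Ico.1 hk).1])]) (by positivity)
    linarith
  have hharm : ∑ k ∈ range N, 1 / ((k : ℝ) + 1) ≤ 1 + log N := by
    have := harmonic_le_one_add_log N
    simpa [harmonic] using this
  calc ∑ k ∈ range N, g (k + 1) / (k + 1)
      = ∑ k ∈ range N, (g (k + 1) - μ) / (k + 1) + μ * ∑ k ∈ range N, 1 / ((k : ℝ) + 1) := by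
        rw [mul_sum, ← sum_add_distrib]
        exact sum_congr rfl fun k _ => by ring
    _ ≤ C + μ * (1 + log N) := by gcongr; linarith
    _ ≤ c * log N := by linarith

theorem eventually_mul_le_sum_range {u : ℕ → ℝ} {L c : ℝ} (hu : Tendsto u atTop (𝓝 L))
    (hc : c < L) : ∀ᶠ N : ℕ in atTop, c * N ≤ ∑ k ∈ range N, u k := by
  filter_upwards [hu.cesaro.eventually (le_mem_nhds hc)] with N hN
  rcases N.eq_zero_or_pos with rfl | hN0
  · simp
  · have : (0 : ℝ) < N := by exact_mod_cast hN0
    rwa [inv_mul_eq_div, le_div_iff₀ this] at hN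

theorem summable_exp_neg_mul_sqrt {c : ℝ} (hc : 0 < c) :
    Summable fun n : ℕ => exp (-(c * √n)) := by
  refine Summable.of_norm_bounded_eventually_nat
    ((summable_one_div_nat_pow.2 one_lt_two).mul_left (24 / c ^ 4)) ?_
  filter_upwards [eventually_gt_atTop 0] with n hn
  have hn' : (0 : ℝ) < n := by exact_mod_cast hn
  have h4 : (c * √n) ^ 4 = c ^ 4 * n ^ 2 := by
    rw [mul_pow, show √(n : ℝ) ^ 4 = (√n ^ 2) ^ 2 by ring, sq_sqrt hn'.le]
  have hbound := pow_div_factorial_le_exp _ (mul_nonneg hc.le (sqrt_nonneg n)) 4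
  rw [h4, show ((4 : ℕ).factorial : ℝ) = 24 by norm_num [Nat.factorial]] at hbound
  rw [norm_of_nonneg (exp_pos _).le, exp_neg, inv_le_iff_one_le_mul₀ (exp_pos _)]
  calc (1 : ℝ) = 24 / c ^ 4 * (1 / n ^ 2) * (c ^ 4 * n ^ 2 / 24) := by field_simp
    _ ≤ 24 / c ^ 4 * (1 / n ^ 2) * exp (c * √n) := by gcongr

def partialSum (f : ℕ → ℝ → ℝ) (n : ℕ) (x : ℝ) : ℝ := ∑ k ∈ range n, f k x

structure DiffIneqFamily (s : Set ℝ) (M : ℝ) (f f' : ℕ → ℝ → ℝ) : Prop where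
  hasDerivWithinAt : ∀ n, ∀ x ∈ s, HasDerivWithinAt (f n) (f' n x) s x
  monotoneOn : ∀ n, MonotoneOn (f n) s
  nonneg : ∀ n, ∀ x ∈ s, 0 ≤ f n x
  le_bound : ∀ n, ∀ x ∈ s, f n x ≤ M
  zero_pos : ∀ x ∈ s, 0 < f 0 x
  mul_le_deriv : ∀ n, 1 ≤ n → ∀ x ∈ s, n / partialSum f n x * f n x ≤ f' n x

namespace DiffIneqFamily

variable {s : Set ℝ} {M : ℝ} {f f' : ℕ → ℝ → ℝ} {n : ℕ} {x y : ℝ}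

theorem partialSum_pos (h : DiffIneqFamily s M f f') (hn : 1 ≤ n) (hx : x ∈ s) :
    0 < partialSum f n x :=
  (h.zero_pos x hx).trans_le
    (single_le_sum (fun k _ => h.nonneg k x hx) (mem_range.2 (by omega)))

theorem partialSum_mono (h : DiffIneqFamily s M f f') (hx : x ∈ s) (hy : y ∈ s) (hxy : x ≤ y) :
    partialSum f n x ≤ partialSum f n y :=
  sum_le_sum fun k _ => h.monotoneOn k hx hy hxy

theorem bound_pos (h : DiffIneqFamily s M f f') (hx : x ∈ s) : 0 < M :=
  (h.zero_pos x hx).trans_le (h.le_bound 0 x hx)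

theorem hasDerivWithinAt_Icc [s.OrdConnected] (h : DiffIneqFamily s M f f') (hx : x ∈ s)
    (hy : y ∈ s) (n : ℕ) :
    ∀ t ∈ Set.Icc x y, HasDerivWithinAt (f n) (f' n t) (Set.Icc x y) t := fun t ht =>
  (h.hasDerivWithinAt n t (Set.Icc_subset s hx hy ht)).mono (Set.Icc_subset s hx hy)

theorem apply_le_mul_exp_neg [s.OrdConnected] (h : DiffIneqFamily s M f f') (hn : 1 ≤ n)
    (hx : x ∈ s) (hy : y ∈ s) (hxy : x ≤ y) :
    f n x ≤ f n y * exp (-(n / partialSum f n y * (y - x))) := by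
  refine le_mul_exp_neg_of_mul_le_hasDerivWithinAt hxy (h.hasDerivWithinAt_Icc hx hy n)
    fun t ht => le_trans ?_ (h.mul_le_deriv n hn t (Set.Icc_subset s hx hy ht))
  have hts := Set.Icc_subset s hx hy ht
  gcongr
  · exact h.nonneg n t hts
  · exact h.partialSum_pos hn hts
  · exact h.partialSum_mono hts hy ht.2

theorem log_div_le_sum_deriv (h : DiffIneqFamily s M f f') {N : ℕ} {t : ℝ} (hN : 1 ≤ N)
    (hx : x ∈ s) (ht : t ∈ s) (hxt : x ≤ t) :
    log (partialSum f N x / M) ≤ ∑ k ∈ range N, f' (k + 1) t / (k + 1) := by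
  calc log (partialSum f N x / M)
      ≤ log ((∑ k ∈ range (N + 1), f k t) / f 0 t) := by
        refine log_le_log (div_pos (h.partialSum_pos hN hx) (h.bound_pos hx))
          (div_le_div₀ (h.partialSum_pos (by omega) ht).le ?_ (h.zero_pos t ht)
            (h.le_bound 0 t ht))
        calc partialSum f N x ≤ partialSum f N t := h.partialSum_mono hx ht hxt
          _ ≤ ∑ k ∈ range (N + 1), f k t :=
            sum_le_sum_of_subset_of_nonneg (range_subset_range.2 N.le_succ)
              fun k _ _ => h.nonneg k t ht
    _ ≤ ∑ k ∈ range N, f (k + 1) t / ∑ j ∈ range (k + 1), f j t :=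
        log_sum_range_succ_div_le (f · t) (h.zero_pos t ht) (fun k => h.nonneg k t ht) N
    _ ≤ ∑ k ∈ range N, f' (k + 1) t / (k + 1) := by
        refine sum_le_sum fun k _ => ?_
        have hderiv := h.mul_le_deriv (k + 1) (by omega) t ht
        push_cast at hderiv
        rw [le_div_iff₀ (by positivity)]
        calc (f (k + 1) t / ∑ j ∈ range (k + 1), f j t) * (k + 1)
            = (k + 1) / partialSum f (k + 1) t * f (k + 1) t := by
              unfold partialSum; ring
          _ ≤ f' (k + 1) t := hderiv

theorem mul_log_le_sum [s.OrdConnected] (h : DiffIneqFamily s M f f') {N : ℕ} (hN : 1 ≤ N)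
    (hx : x ∈ s) (hy : y ∈ s) (hxy : x ≤ y) :
    (y - x) * log (partialSum f N x / M) ≤
      ∑ k ∈ range N, (f (k + 1) y - f (k + 1) x) / (k + 1) := by
  have := mul_sub_le_sub_of_le_hasDerivWithinAt
    (g := fun u => ∑ k ∈ range N, f (k + 1) u / (k + 1)) hxy
    (fun t ht => HasDerivWithinAt.fun_sum fun k _ =>
      (h.hasDerivWithinAt_Icc hx hy (k + 1) t ht).div_const _)
    (fun t ht => h.log_div_le_sum_deriv hN hx (Set.Icc_subset s hx hy ht) ht.1)
  rw [mul_comm]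
  simpa only [sub_div, sum_sub_distrib] using this

theorem eventually_mul_log_le [s.OrdConnected] (h : DiffIneqFamily s M f f') (hx : x ∈ s)
    (hy : y ∈ s) (hxy : x ≤ y) {L c : ℝ}
    (hL : Tendsto (fun n => f n y - f n x) atTop (𝓝 L)) (hLc : L < c) :
    ∀ᶠ N : ℕ in atTop, (y - x) * log (partialSum f N x / M) ≤ c * log N := by
  have hL0 : 0 ≤ L := ge_of_tendsto' hL fun n => sub_nonneg.2 (h.monotoneOn n hx hy hxy)
  filter_upwards [eventually_sum_div_succ_le_mul_log hL hL0 hLc, eventually_ge_atTop 1]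
    with N hsum hN
  exact (h.mul_log_le_sum hN hx hy hxy).trans hsum

theorem eventually_partialSum_le_mul_sqrt [s.OrdConnected] (h : DiffIneqFamily s M f f') {z : ℝ}
    (hx : x ∈ s) (hz : z ∈ s) (hxz : x < z) (hz0 : Tendsto (fun n => f n z) atTop (𝓝 0)) :
    ∀ᶠ N : ℕ in atTop, partialSum f N x ≤ M * √N := by
  have hx0 : Tendsto (fun n => f n x) atTop (𝓝 0) :=
    tendsto_of_tendsto_of_tendsto_of_le_of_le tendsto_const_nhds hz0
      (fun n => h.nonneg n x hx) (fun n => h.monotoneOn n hx hz hxz.le)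
  have hgap : 0 < z - x := sub_pos.2 hxz
  filter_upwards [h.eventually_mul_log_le hx hz hxz.le (by simpa using hz0.sub hx0)
    (half_pos hgap), eventually_ge_atTop 1] with N hlog hN
  have hS := h.partialSum_pos hN hx
  have hM := h.bound_pos hx
  have hsqrt : 0 < √(N : ℝ) := sqrt_pos.2 (by exact_mod_cast hN)
  have : log (partialSum f N x / M) ≤ log √N := by
    rw [log_sqrt (Nat.cast_nonneg N)]
    nlinarith
  rw [log_le_log_iff (div_pos hS hM) hsqrt, div_le_iff₀ hM] at this
  linarith

theorem summable_of_tendsto_zero [s.OrdConnected] (h : DiffIneqFamily s M f f') {z : ℝ}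
    (hx : x ∈ s) (hz : z ∈ s) (hxz : x < z) (hz0 : Tendsto (fun n => f n z) atTop (𝓝 0)) :
    Summable fun n => f n x := by
  obtain ⟨t, hxt, htz⟩ := exists_between hxz
  have ht : t ∈ s := Set.Icc_subset s hx hz ⟨hxt.le, htz.le⟩
  have hM := h.bound_pos hx
  refine Summable.of_norm_bounded_eventually_nat
    ((summable_exp_neg_mul_sqrt (div_pos (sub_pos.2 hxt) hM)).mul_left M) ?_
  filter_upwards [h.eventually_partialSum_le_mul_sqrt ht hz htz hz0,
    eventually_ge_atTop 1] with n hSn hn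
  have hS := h.partialSum_pos hn ht
  have hn' : (0 : ℝ) < n := by exact_mod_cast hn
  have hrate : √n / M ≤ n / partialSum f n t := by
    rw [div_le_div_iff₀ hM hS]
    calc √n * partialSum f n t ≤ √n * (M * √n) := by gcongr
      _ = n * M := by rw [mul_left_comm, mul_self_sqrt hn'.le, mul_comm]
  rw [norm_of_nonneg (h.nonneg n x hx)]
  calc f n x ≤ f n t * exp (-(n / partialSum f n t * (t - x))) :=
        h.apply_le_mul_exp_neg hn hx ht hxt.le
    _ ≤ M * exp (-((t - x) / M * √n)) := by
        refine mul_le_mul (h.le_bound n t ht) (exp_le_exp.2 (neg_le_neg ?_)) (exp_pos _).le hM.le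
        calc (t - x) / M * √n = √n / M * (t - x) := by ring
          _ ≤ n / partialSum f n t * (t - x) := by gcongr

theorem exists_exp_decay_of_summable [s.OrdConnected] (h : DiffIneqFamily s M f f') {β : ℝ}
    (hβ : β ∈ s) (hx : x ∈ s) (hβx : β < x) (hsum : Summable fun n => f n x) :
    ∃ c > 0, ∀ᶠ n : ℕ in atTop, f n β ≤ M * exp (-c * n) := by
  set K := ∑' n, f n x
  have hSK (n : ℕ) : partialSum f n x ≤ K := hsum.sum_le_tsum _ fun k _ => h.nonneg k x hx
  have hK : 0 < K := (h.partialSum_pos le_rfl hx).trans_le (hSK 1)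
  refine ⟨(x - β) / K, div_pos (sub_pos.2 hβx) hK, ?_⟩
  filter_upwards [eventually_ge_atTop 1] with n hn
  have hrate : n / K ≤ n / partialSum f n x :=
    div_le_div_of_nonneg_left (Nat.cast_nonneg n) (h.partialSum_pos hn hx) (hSK n)
  calc f n β ≤ f n x * exp (-(n / partialSum f n x * (x - β))) :=
        h.apply_le_mul_exp_neg hn hβ hx hβx.le
    _ ≤ M * exp (-((x - β) / K) * n) := by
        refine mul_le_mul (h.le_bound n x hx) (exp_le_exp.2 ?_) (exp_pos _).le
          (h.bound_pos hx).le
        rw [neg_mul, neg_le_neg_iff]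
        calc (x - β) / K * n = n / K * (x - β) := by ring
          _ ≤ n / partialSum f n x * (x - β) := by gcongr

theorem sub_le_sub_of_tendsto_of_pos [s.OrdConnected] (h : DiffIneqFamily s M f f')
    {t β Ft Fβ : ℝ} (ht : t ∈ s) (hβ : β ∈ s) (htβ : t ≤ β)
    (hFt : Tendsto (fun n => f n t) atTop (𝓝 Ft)) (hFβ : Tendsto (fun n => f n β) atTop (𝓝 Fβ)) (hpos : 0 < Ft) :
    β - t ≤ Fβ - Ft := by
  by_contra! hlt
  obtain ⟨c, hLc, hcβ⟩ := exists_between hlt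
  have hM := h.bound_pos ht
  have hlog : Tendsto (fun N : ℕ => (β - t - c) * log N) atTop atTop :=
    (tendsto_log_atTop.comp tendsto_natCast_atTop_atTop).const_mul_atTop (by linarith)
  obtain ⟨N, ⟨⟨hgrowth, hlin⟩, hN⟩, hlarge⟩ :=
    (((h.eventually_mul_log_le ht hβ htβ (hFβ.sub hFt) hLc).and
      (eventually_mul_le_sum_range hFt (half_lt_self hpos))).and (eventually_ge_atTop 1)).and
      (hlog.eventually_gt_atTop (-((β - t) * log (Ft / 2 / M)))) |>.exists
  have hN' : (0 : ℝ) < N := by exact_mod_cast hN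
  have hlower : log (Ft / 2 / M) + log N ≤ log (partialSum f N t / M) := by
    rw [← log_mul (by positivity) hN'.ne']
    refine log_le_log (by positivity) ?_
    rw [div_mul_eq_mul_div, div_le_div_iff_of_pos_right hM]
    exact hlin
  have := mul_le_mul_of_nonneg_left hlower (sub_nonneg.2 htβ)
  linarith

end DiffIneqFamily

theorem stmt_0_general (α₀ α₁ M : ℝ) (hα : α₀ < α₁)
    (f f' : ℕ → ℝ → ℝ) (F : ℝ → ℝ)
    (hderiv : ∀ n, ∀ x ∈ Set.Icc α₀ α₁,
      HasDerivWithinAt (f n) (f' n x) (Set.Icc α₀ α₁) x)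
    (hmono : ∀ n, MonotoneOn (f n) (Set.Icc α₀ α₁))
    (hrange : ∀ n, ∀ x ∈ Set.Icc α₀ α₁, f n x ∈ Set.Icc 0 M)
    (hconv : ∀ x ∈ Set.Icc α₀ α₁,
      Tendsto (fun n => f n x) atTop (nhds (F x)))
    (hf0 : ∀ x ∈ Set.Icc α₀ α₁, 0 < f 0 x)
    (hineq : ∀ n, 1 ≤ n → ∀ x ∈ Set.Icc α₀ α₁,
      f' n x ≥ ((n : ℝ) / (∑ k ∈ Finset.range n, f k x)) * f n x) :
    ∃ β₁ ∈ Set.Icc α₀ α₁,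
      (∀ β ∈ Set.Icc α₀ α₁, β < β₁ →
        ∃ c > 0, ∀ᶠ n : ℕ in atTop, f n β ≤ M * Real.exp (-c * n)) ∧
      (∀ β ∈ Set.Icc α₀ α₁, β₁ < β → F β ≥ β - β₁) := by
  have h : DiffIneqFamily (Set.Icc α₀ α₁) M f f' :=
    ⟨hderiv, hmono, fun n x hx => (hrange n x hx).1, fun n x hx => (hrange n x hx).2, hf0, hineq⟩
  have hF_nonneg (x) (hx : x ∈ Set.Icc α₀ α₁) : 0 ≤ F x :=
    ge_of_tendsto' (hconv x hx) fun n => h.nonneg n x hx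
  -- `α₀` keeps `Z` nonempty (`sSup ∅ = 0`); `β₁ = α₀` when `F` has no zeros.
  set Z := insert α₀ {x | x ∈ Set.Icc α₀ α₁ ∧ F x = 0}
  have hα₀Z : α₀ ∈ Z := Set.mem_insert _ _
  have hZα₁ : ∀ z ∈ Z, z ≤ α₁ := Set.forall_mem_insert.2 ⟨hα.le, fun x hx => hx.1.2⟩
  have hZ : BddAbove Z := ⟨α₁, hZα₁⟩
  refine ⟨sSup Z, ⟨le_csSup hZ hα₀Z, csSup_le ⟨α₀, hα₀Z⟩ hZα₁⟩,
    fun β hβ hβZ => ?_, fun β hβ hZβ => ?_⟩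
  · obtain ⟨z, hzZ, hβz⟩ := exists_lt_of_lt_csSup ⟨α₀, hα₀Z⟩ hβZ
    obtain ⟨hz, hFz⟩ : z ∈ Set.Icc α₀ α₁ ∧ F z = 0 :=
      (Set.mem_insert_iff.1 hzZ).resolve_left fun hzα₀ => (hβz.trans_eq hzα₀).not_ge hβ.1
    obtain ⟨x, hβx, hxz⟩ := exists_between hβz
    have hx : x ∈ Set.Icc α₀ α₁ := ⟨hβ.1.trans hβx.le, hxz.le.trans hz.2⟩
    exact h.exists_exp_decay_of_summable hβ hx hβx
      (h.summable_of_tendsto_zero hx hz hxz (hFz ▸ hconv z hz))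
  · refine ge_iff_le.2 (sub_le_comm.1 (le_of_forall_gt_imp_ge_of_dense fun t ht => ?_))
    rcases lt_or_ge t β with htβ | hβt
    · have htI : t ∈ Set.Icc α₀ α₁ := ⟨(le_csSup hZ hα₀Z).trans ht.le,
        htβ.le.trans hβ.2⟩
      have hFt : 0 < F t := (hF_nonneg t htI).lt_of_ne fun h0 =>
        (le_csSup hZ (Set.mem_insert_of_mem _ ⟨htI, h0.symm⟩)).not_gt ht
      have := h.sub_le_sub_of_tendsto_of_pos htI hβ htβ.le (hconv t htI) (hconv β hβ) hFt
      linarith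
    · linarith [hF_nonneg β hβ]

/-- Lemma 1.2 (technical lemma): given differentiable nondecreasing functions
`f n : [α₀, α₁] → [0, M]` converging pointwise to `F`, with `f 0 > 0` and
satisfying `f_n' ≥ (n / Σ_n) f_n`, there exists `β₁ ∈ [α₀, α₁]` such that
below `β₁` the `f n` decay exponentially and above `β₁` we have `F β ≥ β - β₁`. -/
theorem stmt_0 (α₀ α₁ M : ℝ) (hα : α₀ < α₁) (hM : 0 < M)
    (f f' : ℕ → ℝ → ℝ) (F : ℝ → ℝ)
    (hderiv : ∀ n, ∀ x ∈ Set.Icc α₀ α₁,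
      HasDerivWithinAt (f n) (f' n x) (Set.Icc α₀ α₁) x)
    (hmono : ∀ n, MonotoneOn (f n) (Set.Icc α₀ α₁))
    (hrange : ∀ n, ∀ x ∈ Set.Icc α₀ α₁, f n x ∈ Set.Icc 0 M)
    (hconv : ∀ x ∈ Set.Icc α₀ α₁,
      Tendsto (fun n => f n x) atTop (nhds (F x)))
    (hf0 : ∀ x ∈ Set.Icc α₀ α₁, 0 < f 0 x)
    (hineq : ∀ n, 1 ≤ n → ∀ x ∈ Set.Icc α₀ α₁,
      f' n x ≥ ((n : ℝ) / (∑ k ∈ Finset.range n, f k x)) * f n x) :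
    ∃ β₁ ∈ Set.Icc α₀ α₁,
      (∀ β ∈ Set.Icc α₀ α₁, β < β₁ →
        ∃ c > 0, ∀ᶠ n : ℕ in atTop, f n β ≤ M * Real.exp (-c * n)) ∧
      (∀ β ∈ Set.Icc α₀ α₁, β₁ < β → F β ≥ β - β₁) :=
  stmt_0_general α₀ α₁ M hα f f' F hderiv hmono hrange hconv hf0 hineq
end

section
/- Let α₀ < α₁ be real numbers and M > 0. Let (f_n)_{n≥0} be a sequence of differentiable, nondecreasing functions f_n : [α₀, α₁] → [0, M] with f_0(x) > 0 for all x, and set Σ_n := Σ_{k=0}^{n-1} f_k. Assume f_n'(x) ≥ (n / Σ_n(x)) · f_n(x) for all n ≥ 1 and x ∈ [α₀, α₁]. Suppose that for some β ∈ (α₀, α₁] there exist α > 0 and an integer N ≥ 1 such that Σ_n(β) ≤ n^{1−α} for all n ≥ N. Then for every β'' ∈ [α₀, β) there exists c > 0 such that f_n(β'') ≤ M·exp(−c·n) for all sufficiently large n. -/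
/-!
If `Σ_n ≤ S` at a point `y`, then by monotonicity `f_n' ≥ (n / S) f_n` on `[x, y]`, and Grönwall
gives `f_n(x) ≤ f_n(y) e^{-n (y - x) / S}`. Between an intermediate point `y ∈ (β'', β)` and `β`,
with `S = n^{1-α}`, this yields `f_n(y) ≤ M e^{-(β - y) n^α}`, which is summable; so the partial
sums `Σ_n(y)` are bounded by some `C`, and the same estimate between `β''` and `y` with `S = C`
gives exponential decay at `β''`.
-/

open Filter Real Set Finset Topology

lemma summable_exp_neg_mul_rpow {δ α : ℝ} (hδ : 0 < δ) (hα : 0 < α) :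
    Summable fun k : ℕ => exp (-δ * (k : ℝ) ^ α) := by
  have hlim : Tendsto (fun k : ℕ => ((k : ℝ) ^ α) ^ (2 / α) * exp (-δ * (k : ℝ) ^ α))
      atTop (𝓝 0) :=
    (tendsto_rpow_mul_exp_neg_mul_atTop_nhds_zero (2 / α) δ hδ).comp
      ((tendsto_rpow_atTop hα).comp tendsto_natCast_atTop_atTop)
  refine .of_norm_bounded_eventually_nat (Real.summable_one_div_nat_pow.2 one_lt_two) ?_
  filter_upwards [hlim.eventually (ge_mem_nhds one_pos), eventually_gt_atTop 0] with k hk hk0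
  rw [← rpow_mul k.cast_nonneg, mul_div_cancel₀ _ hα.ne', rpow_two] at hk
  rw [norm_of_nonneg (exp_pos _).le, le_div_iff₀ (by positivity), mul_comm]
  exact hk

lemma le_mul_exp_neg_of_hasDerivWithinAt {a b r : ℝ} {g g' : ℝ → ℝ} (hab : a ≤ b)
    (hg : ∀ x ∈ Icc a b, HasDerivWithinAt g (g' x) (Icc a b) x)
    (hr : ∀ x ∈ Icc a b, r * g x ≤ g' x) :
    g a ≤ g b * exp (-(r * (b - a))) := by
  have hG : ∀ x ∈ Icc a b, HasDerivWithinAt (fun x => g x * exp (-(r * x)))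
      (g' x * exp (-(r * x)) + g x * (exp (-(r * x)) * -r)) (Icc a b) x := fun x hx =>
    (hg x hx).mul ((((hasDerivAt_id x).const_mul r).neg.exp).congr_deriv (by simp)).hasDerivWithinAt
  -- `g · exp(-r ·)` is nondecreasing since its derivative is `(g' - r g) exp(-r ·) ≥ 0`.
  have hmono : MonotoneOn (fun x => g x * exp (-(r * x))) (Icc a b) := by
    refine monotoneOn_of_hasDerivWithinAt_nonneg (convex_Icc a b)
      (fun x hx => (hG x hx).continuousWithinAt)
      (fun x hx => (hG x (interior_subset hx)).mono interior_subset) fun x hx => ?_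
    nlinarith [hr x (interior_subset hx), exp_pos (-(r * x))]
  have h := hmono (left_mem_Icc.2 hab) (right_mem_Icc.2 hab) hab
  calc g a = g a * exp (-(r * a)) * exp (r * a) := by
        rw [mul_assoc, ← exp_add, neg_add_cancel, exp_zero, mul_one]
    _ ≤ g b * exp (-(r * b)) * exp (r * a) := mul_le_mul_of_nonneg_right h (exp_pos _).le
    _ = g b * exp (-(r * (b - a))) := by rw [mul_assoc, ← exp_add]; ring_nf

structure PartialSumRate (a b : ℝ) (f f' : ℕ → ℝ → ℝ) : Prop where
  hasDerivWithinAt : ∀ n, ∀ x ∈ Icc a b, HasDerivWithinAt (f n) (f' n x) (Icc a b) x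
  monotoneOn : ∀ n, MonotoneOn (f n) (Icc a b)
  nonneg : ∀ n, ∀ x ∈ Icc a b, 0 ≤ f n x
  zero_pos : ∀ x ∈ Icc a b, 0 < f 0 x
  rate_le : ∀ n, 1 ≤ n → ∀ x ∈ Icc a b, (n / ∑ k ∈ range n, f k x) * f n x ≤ f' n x

namespace PartialSumRate

variable {a b : ℝ} {f f' : ℕ → ℝ → ℝ}

lemma sum_range_pos (hf : PartialSumRate a b f f') {n : ℕ} (hn : 1 ≤ n) {x : ℝ}
    (hx : x ∈ Icc a b) : 0 < ∑ k ∈ range n, f k x :=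
  (hf.zero_pos x hx).trans_le <|
    single_le_sum (fun k _ => hf.nonneg k x hx) (mem_range.2 hn)

lemma sum_range_mono (hf : PartialSumRate a b f f') (n : ℕ) {x y : ℝ} (hx : x ∈ Icc a b)
    (hy : y ∈ Icc a b) (hxy : x ≤ y) : ∑ k ∈ range n, f k x ≤ ∑ k ∈ range n, f k y :=
  sum_le_sum fun k _ => hf.monotoneOn k hx hy hxy

/-- A bound `S` on `Σ_n` at `y` bounds it on `[x, y]`, so there `f_n' ≥ (n / S) f_n`. -/
lemma apply_le_mul_exp_of_sum_range_le (hf : PartialSumRate a b f f') {n : ℕ} (hn : 1 ≤ n)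
    {x y S : ℝ} (hx : x ∈ Icc a b) (hy : y ∈ Icc a b) (hxy : x ≤ y)
    (hS : ∑ k ∈ range n, f k y ≤ S) :
    f n x ≤ f n y * exp (-(n / S * (y - x))) := by
  have hsub : Icc x y ⊆ Icc a b := Icc_subset_Icc hx.1 hy.2
  refine le_mul_exp_neg_of_hasDerivWithinAt hxy
    (fun z hz => (hf.hasDerivWithinAt n z (hsub hz)).mono hsub) fun z hz => ?_
  have hz' := hsub hz
  calc n / S * f n z ≤ (n / ∑ k ∈ range n, f k z) * f n z := by
        gcongr
        · exact hf.nonneg n z hz'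
        · exact hf.sum_range_pos hn hz'
        · exact (hf.sum_range_mono n hz' hy hz.2).trans hS
    _ ≤ f' n z := hf.rate_le n hn z hz'

lemma summable_of_sum_range_le_rpow (hf : PartialSumRate a b f f') {M α β y : ℝ} {N : ℕ}
    (hα : 0 < α) (hβ : β ∈ Icc a b) (hy : y ∈ Icc a b) (hyβ : y < β) (hM : ∀ n, f n β ≤ M)
    (hβsum : ∀ n : ℕ, N ≤ n → ∑ k ∈ range n, f k β ≤ (n : ℝ) ^ (1 - α)) :
    Summable fun n => f n y := by
  refine .of_norm_bounded_eventually_nat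
    ((summable_exp_neg_mul_rpow (sub_pos.2 hyβ) hα).mul_left M) ?_
  filter_upwards [eventually_ge_atTop N, eventually_ge_atTop 1] with n hnN hn
  have hn₀ : (0 : ℝ) < n := by exact_mod_cast hn
  have hrate : (n : ℝ) / (n : ℝ) ^ (1 - α) = (n : ℝ) ^ α := by
    rw [rpow_sub hn₀, rpow_one, div_div_cancel₀ hn₀.ne']
  calc ‖f n y‖ = f n y := norm_of_nonneg (hf.nonneg n y hy)
    _ ≤ f n β * exp (-(n / (n : ℝ) ^ (1 - α) * (β - y))) :=
      hf.apply_le_mul_exp_of_sum_range_le hn hy hβ hyβ.le (hβsum n hnN)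
    _ = f n β * exp (-(β - y) * (n : ℝ) ^ α) := by rw [hrate]; ring_nf
    _ ≤ M * exp (-(β - y) * (n : ℝ) ^ α) := mul_le_mul_of_nonneg_right (hM n) (exp_pos _).le

lemma exists_exp_decay_of_sum_range_le (hf : PartialSumRate a b f f') {M C x y : ℝ}
    (hx : x ∈ Icc a b) (hy : y ∈ Icc a b) (hxy : x < y) (hM : ∀ n, f n y ≤ M)
    (hC : ∀ n, ∑ k ∈ range n, f k y ≤ C) :
    ∃ c > 0, ∀ n ≥ 1, f n x ≤ M * exp (-c * n) := by
  have hC₀ : 0 < C := (hf.sum_range_pos le_rfl hy).trans_le (hC 1)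
  refine ⟨(y - x) / C, div_pos (sub_pos.2 hxy) hC₀, fun n hn => ?_⟩
  calc f n x ≤ f n y * exp (-(n / C * (y - x))) :=
        hf.apply_le_mul_exp_of_sum_range_le hn hx hy hxy.le (hC n)
    _ = f n y * exp (-((y - x) / C) * n) := by ring_nf
    _ ≤ M * exp (-((y - x) / C) * n) := mul_le_mul_of_nonneg_right (hM n) (exp_pos _).le

end PartialSumRate

theorem stmt_2_general (α₀ α₁ M : ℝ)
    (f f' : ℕ → ℝ → ℝ)
    (hderiv : ∀ n, ∀ x ∈ Set.Icc α₀ α₁,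
      HasDerivWithinAt (f n) (f' n x) (Set.Icc α₀ α₁) x)
    (hmono : ∀ n, MonotoneOn (f n) (Set.Icc α₀ α₁))
    (hrange : ∀ n, ∀ x ∈ Set.Icc α₀ α₁, f n x ∈ Set.Icc 0 M)
    (hf0 : ∀ x ∈ Set.Icc α₀ α₁, 0 < f 0 x)
    (hineq : ∀ n, 1 ≤ n → ∀ x ∈ Set.Icc α₀ α₁,
      f' n x ≥ ((n : ℝ) / (∑ k ∈ Finset.range n, f k x)) * f n x)
    (β : ℝ) (hβ : β ∈ Set.Ioc α₀ α₁)
    (α : ℝ) (hαpos : 0 < α) (N : ℕ)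
    (hSig : ∀ n : ℕ, N ≤ n → ∑ k ∈ Finset.range n, f k β ≤ (n : ℝ) ^ ((1 : ℝ) - α)) :
    ∀ β'' ∈ Set.Ico α₀ β,
      ∃ c > 0, ∀ᶠ n : ℕ in atTop, f n β'' ≤ M * Real.exp (-c * n) := by
  rintro β'' ⟨hβ''₀, hβ''β⟩
  have hf : PartialSumRate α₀ α₁ f f' :=
    ⟨hderiv, hmono, fun n x hx => (hrange n x hx).1, hf0, hineq⟩
  have hβmem : β ∈ Icc α₀ α₁ := Ioc_subset_Icc_self hβ
  obtain ⟨y, hβ''y, hyβ⟩ := exists_between hβ''β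
  have hy : y ∈ Icc α₀ α₁ := ⟨hβ''₀.trans hβ''y.le, hyβ.le.trans hβ.2⟩
  have hsum : Summable fun n => f n y := hf.summable_of_sum_range_le_rpow hαpos hβmem hy hyβ
    (fun n => (hrange n β hβmem).2) hSig
  obtain ⟨c, hc, hdecay⟩ := hf.exists_exp_decay_of_sum_range_le
    ⟨hβ''₀, hβ''y.le.trans hy.2⟩ hy hβ''y (fun n => (hrange n y hy).2)
    (fun n => hsum.sum_le_tsum _ fun k _ => hf.nonneg k y hy)
  exact ⟨c, hc, eventually_atTop.2 ⟨1, hdecay⟩⟩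

/-- First step of the proof of Lemma 1.2: if `Σ_n(β) ≤ n^(1-α)` for all large `n`,
then for every `β'' < β` the functions `f n` decay exponentially fast at `β''`. -/
theorem stmt_2 (α₀ α₁ M : ℝ) (hα : α₀ < α₁) (hM : 0 < M)
    (f f' : ℕ → ℝ → ℝ)
    (hderiv : ∀ n, ∀ x ∈ Set.Icc α₀ α₁,
      HasDerivWithinAt (f n) (f' n x) (Set.Icc α₀ α₁) x)
    (hmono : ∀ n, MonotoneOn (f n) (Set.Icc α₀ α₁))
    (hrange : ∀ n, ∀ x ∈ Set.Icc α₀ α₁, f n x ∈ Set.Icc 0 M)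
    (hf0 : ∀ x ∈ Set.Icc α₀ α₁, 0 < f 0 x)
    (hineq : ∀ n, 1 ≤ n → ∀ x ∈ Set.Icc α₀ α₁,
      f' n x ≥ ((n : ℝ) / (∑ k ∈ Finset.range n, f k x)) * f n x)
    (β : ℝ) (hβ : β ∈ Set.Ioc α₀ α₁)
    (α : ℝ) (hαpos : 0 < α) (N : ℕ) (hN : 1 ≤ N)
    (hSig : ∀ n : ℕ, N ≤ n → ∑ k ∈ Finset.range n, f k β ≤ (n : ℝ) ^ ((1 : ℝ) - α)) :
    ∀ β'' ∈ Set.Ico α₀ β,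
      ∃ c > 0, ∀ᶠ n : ℕ in atTop, f n β'' ≤ M * Real.exp (-c * n) :=
  stmt_2_general α₀ α₁ M f f' hderiv hmono hrange hf0 hineq β hβ α hαpos N hSig
end

section
/- Let α₀ < α₁ be real numbers and M > 0. Let (f_n)_{n≥0} be a sequence of differentiable, nondecreasing functions f_n : [α₀, α₁] → [0, M] with f_0(x) > 0 for all x, and set Σ_n := Σ_{k=0}^{n-1} f_k. Assume f_n'(x) ≥ (n / Σ_n(x)) · f_n(x) for all n ≥ 1 and x ∈ [α₀, α₁]. Suppose that for some β' ∈ (α₀, α₁] there exists Σ < ∞ such that Σ_n(β') ≤ Σ for all n ≥ 1. Then for every β'' ∈ [α₀, β') and every n ≥ 0, f_n(β'') ≤ M·exp(−((β' − β'')/Σ)·n). -/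
open Real Set

/- If `f' ≥ c f`, then `f x e^{-c x}` is nondecreasing; with `c = n / Σ` this bounds `f n β''`
by `f n β' e^{-(n/Σ)(β' - β'')} ≤ M e^{-(n/Σ)(β' - β'')}`. The inequality `f n' ≥ (n/Σ) f n`
holds on `[α₀, β']` because there `0 < Σ_n(x) ≤ Σ_n(β') ≤ Σ` by monotonicity. -/

theorem monotoneOn_mul_exp_neg_of_mul_le_deriv {f f' : ℝ → ℝ} {a b c : ℝ}
    (hf : ∀ x ∈ Icc a b, HasDerivWithinAt f (f' x) (Icc a b) x)
    (hf' : ∀ x ∈ Ioo a b, c * f x ≤ f' x) :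
    MonotoneOn (fun x => f x * exp (-c * x)) (Icc a b) := by
  have hexp : ∀ x, HasDerivAt (fun x => exp (-c * x)) (-c * exp (-c * x)) x := fun x => by
    simpa [mul_comm] using ((hasDerivAt_id x).const_mul (-c)).exp
  refine monotoneOn_of_hasDerivWithinAt_nonneg (convex_Icc a b)
    (f' := fun x => (f' x - c * f x) * exp (-c * x)) (fun x hx => ?_) (fun x hx => ?_)
    (fun x hx => ?_)
  · exact (hf x hx).continuousWithinAt.mul (hexp x).continuousAt.continuousWithinAt
  · have hx' := interior_subset hx
    exact (((hf x hx').mul (hexp x).hasDerivWithinAt).mono interior_subset).congr_deriv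
      (by ring)
  · rw [interior_Icc] at hx
    exact mul_nonneg (sub_nonneg.2 (hf' x hx)) (exp_pos _).le

theorem le_mul_exp_neg_of_mul_le_deriv {f f' : ℝ → ℝ} {a b c x : ℝ}
    (hf : ∀ x ∈ Icc a b, HasDerivWithinAt f (f' x) (Icc a b) x)
    (hf' : ∀ x ∈ Ioo a b, c * f x ≤ f' x) (hx : x ∈ Icc a b) :
    f x ≤ f b * exp (-c * (b - x)) := by
  have hmono := monotoneOn_mul_exp_neg_of_mul_le_deriv hf hf' hx
    ⟨hx.1.trans hx.2, le_rfl⟩ hx.2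
  rw [show exp (-c * (b - x)) = exp (-c * b) / exp (-c * x) by rw [← exp_sub]; ring_nf,
    ← mul_div_assoc, le_div_iff₀ (exp_pos _)]
  exact hmono

theorem stmt_3_general (α₀ α₁ M : ℝ)
    (f f' : ℕ → ℝ → ℝ)
    (hderiv : ∀ n, ∀ x ∈ Set.Icc α₀ α₁,
      HasDerivWithinAt (f n) (f' n x) (Set.Icc α₀ α₁) x)
    (hmono : ∀ n, MonotoneOn (f n) (Set.Icc α₀ α₁))
    (hrange : ∀ n, ∀ x ∈ Set.Icc α₀ α₁, f n x ∈ Set.Icc 0 M)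
    (hf0 : ∀ x ∈ Set.Icc α₀ α₁, 0 < f 0 x)
    (hineq : ∀ n, 1 ≤ n → ∀ x ∈ Set.Icc α₀ α₁,
      f' n x ≥ ((n : ℝ) / (∑ k ∈ Finset.range n, f k x)) * f n x)
    (β' : ℝ) (hβ' : β' ∈ Set.Ioc α₀ α₁)
    (S : ℝ) (hS : ∀ n : ℕ, 1 ≤ n → ∑ k ∈ Finset.range n, f k β' ≤ S) :
    ∀ β'' ∈ Set.Ico α₀ β', ∀ n : ℕ,
      f n β'' ≤ M * Real.exp (-((β' - β'') / S) * n) := by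
  intro β'' hβ'' n
  have hsub : Icc α₀ β' ⊆ Icc α₀ α₁ := Icc_subset_Icc_right hβ'.2
  have hβ'mem : β' ∈ Icc α₀ β' := ⟨hβ'.1.le, le_rfl⟩
  rcases Nat.eq_zero_or_pos n with rfl | hn
  · simpa using (hrange 0 β'' (hsub ⟨hβ''.1, hβ''.2.le⟩)).2
  have hsum : ∀ x ∈ Icc α₀ β', 0 < ∑ k ∈ Finset.range n, f k x ∧
      ∑ k ∈ Finset.range n, f k x ≤ S := fun x hx =>
    ⟨Finset.sum_pos' (fun k _ => (hrange k x (hsub hx)).1)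
        ⟨0, Finset.mem_range.2 hn, hf0 x (hsub hx)⟩,
      (Finset.sum_le_sum fun k _ => hmono k (hsub hx) (hsub hβ'mem) hx.2).trans (hS n hn)⟩
  have hgrowth : ∀ x ∈ Ioo α₀ β', (n / S) * f n x ≤ f' n x := fun x hx =>
    have hx' := Ioo_subset_Icc_self hx
    calc (n / S) * f n x ≤ (n / ∑ k ∈ Finset.range n, f k x) * f n x :=
          mul_le_mul_of_nonneg_right
            (div_le_div_of_nonneg_left n.cast_nonneg (hsum x hx').1 (hsum x hx').2)
            (hrange n x (hsub hx')).1
      _ ≤ f' n x := hineq n hn x (hsub hx')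
  calc f n β'' ≤ f n β' * exp (-(n / S) * (β' - β'')) :=
        le_mul_exp_neg_of_mul_le_deriv (fun x hx => (hderiv n x (hsub hx)).mono hsub)
          hgrowth ⟨hβ''.1, hβ''.2.le⟩
    _ ≤ M * exp (-((β' - β'') / S) * n) := by
        rw [show -(n / S) * (β' - β'') = -((β' - β'') / S) * n by ring]
        exact mul_le_mul_of_nonneg_right (hrange n β' (hsub hβ'mem)).2 (exp_pos _).le

/-- Second step of the proof of Lemma 1.2: if the sums `Σ_n(β')` are uniformly
bounded by `Σ`, then for every `β'' < β'` we have
`f n β'' ≤ M exp (-((β' - β'')/Σ) n)` for all `n`. -/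
theorem stmt_3 (α₀ α₁ M : ℝ) (hα : α₀ < α₁) (hM : 0 < M)
    (f f' : ℕ → ℝ → ℝ)
    (hderiv : ∀ n, ∀ x ∈ Set.Icc α₀ α₁,
      HasDerivWithinAt (f n) (f' n x) (Set.Icc α₀ α₁) x)
    (hmono : ∀ n, MonotoneOn (f n) (Set.Icc α₀ α₁))
    (hrange : ∀ n, ∀ x ∈ Set.Icc α₀ α₁, f n x ∈ Set.Icc 0 M)
    (hf0 : ∀ x ∈ Set.Icc α₀ α₁, 0 < f 0 x)
    (hineq : ∀ n, 1 ≤ n → ∀ x ∈ Set.Icc α₀ α₁,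
      f' n x ≥ ((n : ℝ) / (∑ k ∈ Finset.range n, f k x)) * f n x)
    (β' : ℝ) (hβ' : β' ∈ Set.Ioc α₀ α₁)
    (S : ℝ) (hS : ∀ n : ℕ, 1 ≤ n → ∑ k ∈ Finset.range n, f k β' ≤ S) :
    ∀ β'' ∈ Set.Ico α₀ β', ∀ n : ℕ,
      f n β'' ≤ M * Real.exp (-((β' - β'') / S) * n) :=
  stmt_3_general α₀ α₁ M f f' hderiv hmono hrange hf0 hineq β' hβ' S hS
end

section
/- Let α₀ < α₁ be real numbers and M > 0. Let (f_n)_{n≥0} be a sequence of differentiable, nondecreasing functions f_n : [α₀, α₁] → [0, M] that converges pointwise to f, with f_0(x) > 0 for all x, and set Σ_n := Σ_{k=0}^{n-1} f_k. Assume f_n'(x) ≥ (n / Σ_n(x)) · f_n(x) for all n ≥ 1 and x ∈ [α₀, α₁]. Then for all β', β ∈ [α₀, α₁] with β' < β, f(β) − f(β') ≥ (β − β') · limsup_{n→∞} (log Σ_n(β'))/(log n). -/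
/-!
The hypothesis says that `log fₙ` grows at rate at least `n / Σₙ`, so
`fₙ u * exp (c (v - u)) ≤ fₙ v` whenever `u ≤ v` and `c Σₙ(v) ≤ n`. As `Σₙ ≤ n M`, the limsup is
at most `1`.

If `F > 0` on `(β', β]`, taking `c = n / Σₙ(v) → 1 / F v` (Cesàro) gives
`F u * exp ((v - u) / F v) ≤ F v`, hence `v - u ≤ (F v - F u) (1 + O(v - u))`; summing over fine
partitions, `F β - F β' ≥ β - β'`.

Otherwise `F w = 0` for some `w ∈ (β', β]`, so `Σₖ(w) ≤ k / A` for large `k`. Moving left by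
`δ / 2^(i+1)` squares the rate `A` at the cost of multiplying the threshold on `k` by `A³`; along
this cascade `fₖ(β')` decays so fast that `Σₙ(β')` stays bounded, and the limsup is at most `0`.
-/

open Filter Real Set Finset Topology

theorem mul_exp_le_of_mul_le_deriv {g g' : ℝ → ℝ} {c u v : ℝ} (huv : u ≤ v)
    (hg : ∀ x ∈ Icc u v, HasDerivWithinAt g (g' x) (Icc u v) x)
    (hc : ∀ x ∈ Ioo u v, c * g x ≤ g' x) :
    g u * exp (c * (v - u)) ≤ g v := by
  have he : ∀ x, HasDerivAt (fun x => exp (-(c * x))) (exp (-(c * x)) * -c) x := fun x => by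
    simpa using ((hasDerivAt_id x).const_mul c).neg.exp
  have hmono : MonotoneOn (fun x => g x * exp (-(c * x))) (Icc u v) := by
    refine monotoneOn_of_hasDerivWithinAt_nonneg (f' := fun x => g' x * exp (-(c * x)) +
      g x * (exp (-(c * x)) * -c)) (convex_Icc u v)
      (fun x hx => (hg x hx).continuousWithinAt.mul (he x).continuousAt.continuousWithinAt)
      (fun x hx => ?_) (fun x hx => ?_) <;> simp only [interior_Icc] at hx ⊢
    · exact ((hg x (Ioo_subset_Icc_self hx)).mono Ioo_subset_Icc_self).mul (he x).hasDerivWithinAt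
    · have := mul_le_mul_of_nonneg_left (sub_nonneg.2 (hc x hx)) (exp_pos (-(c * x))).le
      linarith
  have hgv := hmono (left_mem_Icc.2 huv) (right_mem_Icc.2 huv) huv
  calc g u * exp (c * (v - u)) = g u * exp (-(c * u)) * exp (c * v) := by
        rw [mul_assoc, ← exp_add]; ring_nf
    _ ≤ g v * exp (-(c * v)) * exp (c * v) := by gcongr
    _ = g v := by rw [mul_assoc, ← exp_add, neg_add_cancel, exp_zero, mul_one]

theorem sub_le_sub_of_forall_sub_le_mul_one_add {F : ℝ → ℝ} {a b C : ℝ} (hab : a ≤ b)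
    (h : ∀ u v, a ≤ u → u ≤ v → v ≤ b → v - u ≤ (F v - F u) * (1 + C * (v - u))) :
    b - a ≤ F b - F a := by
  have hpartition : ∀ m : ℕ, 0 < m → b - a ≤ (F b - F a) * (1 + C * ((b - a) / m)) := by
    intro m hm
    set Δ := (b - a) / m
    have hΔ : 0 ≤ Δ := div_nonneg (sub_nonneg.2 hab) m.cast_nonneg
    have hmΔ : m * Δ = b - a := mul_div_cancel₀ _ (by positivity)
    set y : ℕ → ℝ := fun i => a + i * Δ
    have hy : ∀ i ≤ m, a ≤ y i ∧ y i ≤ b := fun i hi => by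
      have : (i : ℝ) * Δ ≤ m * Δ := by gcongr
      constructor <;> nlinarith [i.cast_nonneg (α := ℝ)]
    have hstep : ∀ i, y (i + 1) - y i = Δ := fun i => by simp only [y]; push_cast; ring
    calc b - a = ∑ i ∈ range m, (y (i + 1) - y i) := by simp [hstep, hmΔ]
      _ ≤ ∑ i ∈ range m, (F (y (i + 1)) - F (y i)) * (1 + C * Δ) := by
        refine sum_le_sum fun i hi => ?_
        have hi := mem_range.1 hi
        simpa only [hstep] using
          h _ _ (hy i hi.le).1 (by linarith [hstep i]) (hy (i + 1) hi).2
      _ = (F b - F a) * (1 + C * Δ) := by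
        rw [← sum_mul, sum_range_sub (fun i => F (y i))]
        simp [y, hmΔ]
  have hlim : Tendsto (fun m : ℕ => (F b - F a) * (1 + C * ((b - a) / m))) atTop
      (𝓝 (F b - F a)) := by
    simpa using (tendsto_const_nhds (x := F b - F a)).mul
      ((tendsto_const_nhds (x := (1 : ℝ))).add
        ((tendsto_const_div_atTop_nhds_zero_nat (b - a)).const_mul C))
  exact ge_of_tendsto hlim ((eventually_gt_atTop 0).mono hpartition)

theorem four_pow_mul_le_pow_two_pow {A : ℝ} (hA : 4 ≤ A) (j : ℕ) : 4 ^ j * A ≤ A ^ 2 ^ j :=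
  calc 4 ^ j * A ≤ A ^ j * A := by gcongr
    _ = A ^ (j + 1) := (pow_succ A j).symm
    _ ≤ A ^ 2 ^ j := pow_le_pow_right₀ (by linarith) (Nat.lt_two_pow_self)

theorem pow_two_pow_pow_le_exp {A δ : ℝ} {m : ℕ} (hA : 4 ≤ A) (hδ : 0 ≤ δ)
    (h : m * log A ≤ δ * A) (j : ℕ) : (A ^ 2 ^ j) ^ m ≤ exp (δ * A ^ 2 ^ j / 2 ^ j) := by
  have hA0 : 0 < A := by linarith
  rw [← exp_log (by positivity : 0 < (A ^ 2 ^ j) ^ m), exp_le_exp, log_pow, log_pow,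
    le_div_iff₀ (by positivity)]
  push_cast
  calc m * (2 ^ j * log A) * 2 ^ j = 4 ^ j * (m * log A) := by
        rw [show (4 : ℝ) = 2 * 2 by norm_num, mul_pow]; ring
    _ ≤ 4 ^ j * (δ * A) := by gcongr
    _ ≤ δ * A ^ 2 ^ j := by nlinarith [four_pow_mul_le_pow_two_pow hA j]

theorem sum_range_le_add_sum_mul {g : ℕ → ℝ} {T : ℕ → ℕ} {ε : ℕ → ℝ}
    (hT : ∀ i, T i ≤ T (i + 1)) (hε : ∀ i, 0 ≤ ε i) (hg : ∀ i k, T i ≤ k → g k ≤ ε i)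
    (n : ℕ) :
    ∑ k ∈ range (T n), g k ≤ ∑ k ∈ range (T 0), g k + ∑ i ∈ range n, T (i + 1) * ε i := by
  induction n with
  | zero => simp
  | succ n ih =>
    rw [sum_range_succ, ← sum_range_add_sum_Ico _ (hT n)]
    have hblock : ∑ k ∈ Finset.Ico (T n) (T (n + 1)), g k ≤ T (n + 1) * ε n := by
      refine (sum_le_card_nsmul _ _ _ fun k hk => hg n k (Finset.mem_Ico.1 hk).1).trans ?_
      rw [nsmul_eq_mul, Nat.card_Ico]
      gcongr
      · exact hε n
      · exact_mod_cast Nat.sub_le _ _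
    linarith

theorem pow_two_pow_pow_six_mul_exp_neg_le {A δ : ℝ} (hA : 4 ≤ A) (hδ : 0 ≤ δ)
    (h : 7 * log A ≤ δ * A) (i : ℕ) : (A ^ 2 ^ i) ^ 6 * exp (-(δ * A ^ 2 ^ i)) ≤ (1 / 2) ^ i := by
  set x := A ^ 2 ^ i
  have hx : 2 ^ i ≤ x := calc
    (2 : ℝ) ^ i ≤ 4 ^ i := pow_le_pow_left₀ zero_le_two (by norm_num) i
    _ ≤ 4 ^ i * A := le_mul_of_one_le_right (by positivity) (by linarith)
    _ ≤ x := four_pow_mul_le_pow_two_pow hA i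
  have hx0 : 0 < x := lt_of_lt_of_le (by positivity) hx
  have h7 : x ^ 7 ≤ exp (δ * x) := (pow_two_pow_pow_le_exp hA hδ (by exact_mod_cast h) i).trans
    (exp_le_exp.2 (div_le_self (by positivity) (one_le_pow₀ one_le_two)))
  calc x ^ 6 * exp (-(δ * x)) ≤ x ^ 6 * (x ^ 7)⁻¹ := by rw [exp_neg]; gcongr
    _ = x⁻¹ := by field_simp
    _ ≤ (1 / 2) ^ i := by rw [one_div, inv_pow]; gcongr

theorem exists_sum_range_le_of_le_exp {g : ℕ → ℝ} (hg : ∀ k, 0 ≤ g k) {A K : ℕ} {C δ : ℝ}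
    (hC : 0 ≤ C) (hK : 1 ≤ K) (hA : 4 ≤ A) (hδ : 0 ≤ δ) (hAδ : 7 * log A ≤ δ * A)
    (hdecay : ∀ i k, K * (A ^ 2 ^ i) ^ 3 ≤ k → g k ≤ C * exp (-(δ * A ^ 2 ^ i))) :
    ∃ B, ∀ n, ∑ k ∈ range n, g k ≤ B := by
  set T : ℕ → ℕ := fun i => K * (A ^ 2 ^ i) ^ 3
  have hT_succ : ∀ i, T (i + 1) = T i * (A ^ 2 ^ i) ^ 3 := fun i => by
    simp only [T, pow_succ, pow_mul]; ring
  have hT : ∀ i, T i ≤ T (i + 1) := fun i => by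
    rw [hT_succ]; exact Nat.le_mul_of_pos_right _ (by positivity)
  have hblock : ∀ i, T (i + 1) * (C * exp (-(δ * A ^ 2 ^ i))) ≤ K * C * (1 / 2) ^ i := by
    intro i
    have hTx : (T (i + 1) : ℝ) = K * ((A : ℝ) ^ 2 ^ i) ^ 6 := by simp only [T]; push_cast; ring
    rw [hTx, show (K : ℝ) * ((A : ℝ) ^ 2 ^ i) ^ 6 * (C * exp (-(δ * A ^ 2 ^ i)))
      = K * C * (((A : ℝ) ^ 2 ^ i) ^ 6 * exp (-(δ * A ^ 2 ^ i))) by ring]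
    gcongr
    exact pow_two_pow_pow_six_mul_exp_neg_le (by exact_mod_cast hA) hδ (by exact_mod_cast hAδ) i
  refine ⟨∑ k ∈ range (T 0), g k + 2 * (K * C), fun n => ?_⟩
  have hnT : n ≤ T n := calc
    n ≤ A ^ n := (Nat.lt_pow_self (by omega)).le
    _ ≤ A ^ 2 ^ n := Nat.pow_le_pow_right (by omega) Nat.lt_two_pow_self.le
    _ ≤ (A ^ 2 ^ n) ^ 3 := Nat.le_self_pow (by norm_num) _
    _ ≤ T n := Nat.le_mul_of_pos_left _ hK
  calc ∑ k ∈ range n, g k ≤ ∑ k ∈ range (T n), g k :=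
        sum_le_sum_of_subset_of_nonneg (range_subset_range.2 hnT) fun k _ _ => hg k
    _ ≤ ∑ k ∈ range (T 0), g k + ∑ i ∈ range n, T (i + 1) * (C * exp (-(δ * A ^ 2 ^ i))) :=
        sum_range_le_add_sum_mul hT (fun i => by positivity) hdecay n
    _ ≤ ∑ k ∈ range (T 0), g k + ∑ i ∈ range n, K * C * (1 / 2) ^ i :=
        add_le_add_right (sum_le_sum fun i _ => hblock i) _
    _ ≤ ∑ k ∈ range (T 0), g k + 2 * (K * C) := by
        rw [← mul_sum]
        nlinarith [sum_geometric_two_le n, mul_nonneg K.cast_nonneg hC]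

theorem limsup_log_div_log_le {s : ℕ → ℝ} {c C p : ℝ} (hc : 0 < c)
    (hcs : ∀ᶠ n in atTop, c ≤ s n) (hsC : ∀ᶠ n in atTop, s n ≤ C * n ^ p) :
    limsup (fun n : ℕ => log (s n) / log n) atTop ≤ p := by
  have hlog : Tendsto (fun n : ℕ => log (n : ℝ)) atTop atTop :=
    tendsto_log_atTop.comp tendsto_natCast_atTop_atTop
  have hlogpos : ∀ᶠ n : ℕ in atTop, 0 < log (n : ℝ) := hlog.eventually_gt_atTop 0
  have hupper : Tendsto (fun n : ℕ => p + log C / log n) atTop (𝓝 p) := by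
    simpa using tendsto_const_nhds.add (tendsto_const_nhds.div_atTop hlog)
  have hlower : ∀ᶠ n : ℕ in atTop, -1 ≤ log (s n) / log n := by
    have : Tendsto (fun n : ℕ => log c / log n) atTop (𝓝 0) := tendsto_const_nhds.div_atTop hlog
    filter_upwards [this.eventually (lt_mem_nhds (by norm_num : (-1 : ℝ) < 0)), hcs, hlogpos]
      with n h1 hn hn'
    exact h1.le.trans (div_le_div_of_nonneg_right (log_le_log hc hn) hn'.le)
  refine (limsup_le_limsup ?_ (isCoboundedUnder_le_of_eventually_le _ hlower)
    hupper.isBoundedUnder_le).trans hupper.limsup_eq.le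
  filter_upwards [hcs, hsC, hlogpos, eventually_gt_atTop 0] with n hn hnC hn' hn0
  have hnp : (0 : ℝ) < (n : ℝ) ^ p := rpow_pos_of_pos (by exact_mod_cast hn0) p
  have hC : 0 < C := pos_of_mul_pos_left (hc.trans_le (hn.trans hnC)) hnp.le
  rw [div_le_iff₀ hn', add_mul, div_mul_cancel₀ _ hn'.ne']
  calc log (s n) ≤ log (C * n ^ p) := log_le_log (hc.trans_le hn) hnC
    _ = p * log n + log C := by
      rw [log_mul hC.ne' hnp.ne', log_rpow (by exact_mod_cast hn0)]; ring

theorem eventually_log_le_mul {ε : ℝ} (hε : 0 < ε) : ∀ᶠ n : ℕ in atTop, log n ≤ ε * n := by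
  filter_upwards [tendsto_natCast_atTop_atTop.eventually (isLittleO_log_id_atTop.bound hε)]
    with n hn
  simp only [norm_eq_abs, id, Nat.abs_cast] at hn
  exact (le_abs_self _).trans hn

theorem exists_forall_mul_sum_range_le {g : ℕ → ℝ} (hg : Tendsto g atTop (𝓝 0)) {A : ℝ}
    (hA : 0 < A) : ∃ N, ∀ k, N ≤ k → A * ∑ j ∈ range k, g j ≤ k := by
  obtain ⟨N, hN⟩ := eventually_atTop.1 <| hg.cesaro.eventually (gt_mem_nhds (inv_pos.2 hA))
  refine ⟨N + 1, fun k hk => ?_⟩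
  have := hN k (by omega)
  rw [inv_mul_lt_iff₀ (by norm_cast; omega), lt_mul_inv_iff₀ hA] at this
  linarith

structure IsGrowthFamily (α₀ α₁ M : ℝ) (f f' : ℕ → ℝ → ℝ) : Prop where
  hasDerivWithinAt : ∀ n, ∀ x ∈ Icc α₀ α₁, HasDerivWithinAt (f n) (f' n x) (Icc α₀ α₁) x
  monotoneOn : ∀ n, MonotoneOn (f n) (Icc α₀ α₁)
  mem_Icc : ∀ n, ∀ x ∈ Icc α₀ α₁, f n x ∈ Icc 0 M
  pos_zero : ∀ x ∈ Icc α₀ α₁, 0 < f 0 x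
  mul_le_deriv : ∀ n, 1 ≤ n → ∀ x ∈ Icc α₀ α₁, (n / ∑ k ∈ range n, f k x) * f n x ≤ f' n x

namespace IsGrowthFamily

variable {α₀ α₁ M : ℝ} {f f' : ℕ → ℝ → ℝ}

theorem sum_range_pos (h : IsGrowthFamily α₀ α₁ M f f') {n : ℕ} (hn : 1 ≤ n) {x : ℝ}
    (hx : x ∈ Icc α₀ α₁) : 0 < ∑ k ∈ range n, f k x :=
  sum_pos' (fun k _ => (h.mem_Icc k x hx).1) ⟨0, mem_range.2 hn, h.pos_zero x hx⟩

theorem sum_range_mono (h : IsGrowthFamily α₀ α₁ M f f') (n : ℕ) {x y : ℝ}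
    (hx : x ∈ Icc α₀ α₁) (hy : y ∈ Icc α₀ α₁) (hxy : x ≤ y) :
    ∑ k ∈ range n, f k x ≤ ∑ k ∈ range n, f k y :=
  sum_le_sum fun k _ => h.monotoneOn k hx hy hxy

theorem sum_range_le (h : IsGrowthFamily α₀ α₁ M f f') (n : ℕ) {x : ℝ}
    (hx : x ∈ Icc α₀ α₁) : ∑ k ∈ range n, f k x ≤ n * M := by
  simpa using sum_le_card_nsmul (range n) (fun k => f k x) M fun k _ => (h.mem_Icc k x hx).2

theorem mul_exp_le (h : IsGrowthFamily α₀ α₁ M f f') {n : ℕ} (hn : 1 ≤ n) {u v c : ℝ}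
    (hu : u ∈ Icc α₀ α₁) (hv : v ∈ Icc α₀ α₁) (huv : u ≤ v) (hc : 0 ≤ c)
    (hcv : c * ∑ k ∈ range n, f k v ≤ n) :
    f n u * exp (c * (v - u)) ≤ f n v := by
  have hsub : Icc u v ⊆ Icc α₀ α₁ := Icc_subset_Icc hu.1 hv.2
  refine mul_exp_le_of_mul_le_deriv huv
    (fun x hx => (h.hasDerivWithinAt n x (hsub hx)).mono hsub) fun x hx => ?_
  have hxI : x ∈ Icc α₀ α₁ := hsub (Ioo_subset_Icc_self hx)
  have hcx : c ≤ n / ∑ k ∈ range n, f k x := by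
    rw [le_div_iff₀ (h.sum_range_pos hn hxI)]
    exact (mul_le_mul_of_nonneg_left (h.sum_range_mono n hxI hv hx.2.le) hc).trans hcv
  exact (mul_le_mul_of_nonneg_right hcx (h.mem_Icc n x hxI).1).trans (h.mul_le_deriv n hn x hxI)

theorem le_mul_exp_neg (h : IsGrowthFamily α₀ α₁ M f f') {n : ℕ} (hn : 1 ≤ n) {u v c : ℝ}
    (hu : u ∈ Icc α₀ α₁) (hv : v ∈ Icc α₀ α₁) (huv : u ≤ v) (hc : 0 ≤ c)
    (hcv : c * ∑ k ∈ range n, f k v ≤ n) :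
    f n u ≤ M * exp (-(c * (v - u))) := by
  rw [exp_neg, ← div_eq_mul_inv, le_div_iff₀ (exp_pos _)]
  exact (h.mul_exp_le hn hu hv huv hc hcv).trans (h.mem_Icc n v hv).2

theorem rate_step (h : IsGrowthFamily α₀ α₁ M f f') {u z : ℝ} {A K : ℕ}
    (hu : u ∈ Icc α₀ α₁) (hz : z ∈ Icc α₀ α₁) (huz : u ≤ z) (hK : 1 ≤ K) (hA : 2 * M ≤ A)
    (hexp : (A : ℝ) ^ 3 ≤ exp (A * (z - u)))
    (hrate : ∀ k, K ≤ k → (A : ℝ) * ∑ j ∈ range k, f j z ≤ k) :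
    ∀ k, A ^ 3 * K ≤ k → (A : ℝ) ^ 2 * ∑ j ∈ range k, f j u ≤ k := by
  intro k hk
  have hM : 0 < M := (h.pos_zero z hz).trans_le (h.mem_Icc 0 z hz).2
  have hA0 : (0 : ℝ) < A := by linarith
  have hKk : K ≤ k := (Nat.le_mul_of_pos_left K (by exact_mod_cast pow_pos hA0 3)).trans hk
  -- past `K`, the comparison on `[u, z]` makes every term of `Σₖ(u)` at most `M / A³`
  have hsmall : ∀ j ∈ Finset.Ico K k, f j u ≤ 1 / (2 * A ^ 2) := fun j hj => by
    have hj := (Finset.mem_Ico.1 hj).1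
    calc f j u ≤ M * exp (-(A * (z - u))) :=
          h.le_mul_exp_neg (hK.trans hj) hu hz huz hA0.le (hrate j hj)
      _ ≤ M * ((A : ℝ) ^ 3)⁻¹ := by
          rw [exp_neg]; gcongr
      _ ≤ 1 / (2 * A ^ 2) := by
          rw [← div_eq_mul_inv, div_le_div_iff₀ (by positivity) (by positivity)]
          nlinarith [sq_nonneg (A : ℝ)]
  have hhead := h.sum_range_le K hu
  have htail : ∑ j ∈ Finset.Ico K k, f j u ≤ k * (1 / (2 * A ^ 2)) := by
    refine (sum_le_card_nsmul _ _ _ hsmall).trans ?_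
    rw [nsmul_eq_mul, Nat.card_Ico]
    gcongr
    exact_mod_cast Nat.sub_le k K
  have hkA : 2 * A ^ 2 * K * M ≤ k := by
    have : ((A ^ 3 * K : ℕ) : ℝ) ≤ k := by exact_mod_cast hk
    push_cast at this
    nlinarith
  rw [← sum_range_add_sum_Ico _ hKk]
  have : (A : ℝ) ^ 2 * (k * (1 / (2 * A ^ 2))) = k / 2 := by field_simp
  nlinarith

theorem rate_cascade (h : IsGrowthFamily α₀ α₁ M f f') {w δ : ℝ} {A K : ℕ}
    (hw : w ∈ Icc α₀ α₁) (hwδ : w - δ ∈ Icc α₀ α₁) (hδ : 0 ≤ δ) (hK : 1 ≤ K) (hA : 4 ≤ A)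
    (hAM : 2 * M ≤ A) (hAδ : 6 * log A ≤ δ * A)
    (hrate : ∀ k, K * A ^ 3 ≤ k → (A : ℝ) * ∑ j ∈ range k, f j w ≤ k) (i : ℕ) :
    ∀ k, K * (A ^ 2 ^ i) ^ 3 ≤ k →
      (A : ℝ) ^ 2 ^ i * ∑ j ∈ range k, f j (w - δ + δ / 2 ^ i) ≤ k := by
  have hA' : (4 : ℝ) ≤ A := by exact_mod_cast hA
  have hmem : ∀ i : ℕ, w - δ + δ / 2 ^ i ∈ Icc α₀ α₁ := fun i => by
    have : δ / 2 ^ i ≤ δ := div_le_self hδ (one_le_pow₀ one_le_two)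
    exact ⟨by linarith [hwδ.1, div_nonneg hδ (pow_nonneg zero_le_two i)], by linarith [hw.2]⟩
  induction i with
  | zero => simpa using hrate
  | succ i ih =>
    have hgap : w - δ + δ / 2 ^ i - (w - δ + δ / 2 ^ (i + 1)) = δ / 2 ^ (i + 1) := by
      rw [pow_succ]; ring
    have hexp : ((A : ℝ) ^ 2 ^ i) ^ 3 ≤ exp ((A : ℝ) ^ 2 ^ i * (δ / 2 ^ (i + 1))) := by
      have hlogA : 0 ≤ log (A : ℝ) := log_nonneg (by linarith)
      convert pow_two_pow_pow_le_exp (m := 3) (δ := δ / 2) hA' (by positivity)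
        (by push_cast; linarith) i using 2
      rw [pow_succ]; ring
    have hstep := h.rate_step (A := A ^ 2 ^ i) (K := K * (A ^ 2 ^ i) ^ 3) (hmem (i + 1)) (hmem i)
      (by gcongr <;> norm_num) (Nat.one_le_iff_ne_zero.2 (by positivity))
      (hAM.trans (by exact_mod_cast Nat.le_self_pow (by positivity) A))
      (by rw [hgap]; exact_mod_cast hexp) (by exact_mod_cast ih)
    have hsq : A ^ 2 ^ (i + 1) = (A ^ 2 ^ i) ^ 2 := by rw [pow_succ, pow_mul]
    intro k hk
    rw [hsq] at hk
    rw [← Nat.cast_pow, hsq]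
    exact_mod_cast hstep k (by linarith)

theorem exists_sum_range_le (h : IsGrowthFamily α₀ α₁ M f f') {b w : ℝ}
    (hb : b ∈ Icc α₀ α₁) (hw : w ∈ Icc α₀ α₁) (hbw : b < w)
    (hzero : Tendsto (fun k => f k w) atTop (𝓝 0)) :
    ∃ B, ∀ n, ∑ k ∈ range n, f k b ≤ B := by
  set δ := (w - b) / 2
  have hδ : 0 < δ := by simp only [δ]; linarith
  have hwδ : w - δ = b + δ := by simp only [δ]; ring
  have hM : 0 < M := (h.pos_zero w hw).trans_le (h.mem_Icc 0 w hw).2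
  obtain ⟨A, hA4, hAM, hAδ⟩ : ∃ A : ℕ, 4 ≤ A ∧ 2 * M ≤ A ∧ log A ≤ δ / 7 * A :=
    ((eventually_ge_atTop 4).and ((tendsto_natCast_atTop_atTop.eventually_ge_atTop (2 * M)).and
      (eventually_log_le_mul (by positivity)))).exists
  have hA4' : (4 : ℝ) ≤ A := by exact_mod_cast hA4
  have hA0 : (0 : ℝ) < A := by linarith
  obtain ⟨N, hN⟩ := exists_forall_mul_sum_range_le hzero hA0
  have hz : ∀ i : ℕ, w - δ + δ / 2 ^ i ∈ Icc α₀ α₁ ∧ δ ≤ w - δ + δ / 2 ^ i - b := fun i => by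
    have : δ / 2 ^ i ≤ δ := div_le_self hδ.le (one_le_pow₀ one_le_two)
    have : 0 ≤ δ / 2 ^ i := by positivity
    exact ⟨⟨by linarith [hb.1], by linarith [hw.2]⟩, by linarith⟩
  have hcascade := h.rate_cascade (K := N + 1) hw
    (hwδ ▸ ⟨by linarith [hb.1], by linarith [hw.2]⟩) hδ.le (by omega) hA4 hAM
    (by linarith [log_nonneg (by linarith : (1 : ℝ) ≤ A)])
    fun k hk => hN k (le_trans (by nlinarith [Nat.one_le_pow 3 A (by omega)]) hk)
  refine exists_sum_range_le_of_le_exp (K := N + 1) (fun k => (h.mem_Icc k b hb).1) hM.le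
    (by omega) hA4 hδ.le (by linarith) fun i k hk => ?_
  have hk1 : 1 ≤ k := le_trans (Nat.one_le_iff_ne_zero.2 (by positivity)) hk
  calc f k b ≤ M * exp (-((A : ℝ) ^ 2 ^ i * (w - δ + δ / 2 ^ i - b))) :=
        h.le_mul_exp_neg hk1 hb (hz i).1 (by linarith [(hz i).2]) (by positivity)
          (hcascade i k hk)
    _ ≤ M * exp (-(δ * A ^ 2 ^ i)) := by
        rw [mul_comm δ]
        gcongr
        exact (hz i).2

section Limit

variable {F : ℝ → ℝ}

theorem monotoneOn_of_tendsto (h : IsGrowthFamily α₀ α₁ M f f')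
    (hconv : ∀ x ∈ Icc α₀ α₁, Tendsto (fun n => f n x) atTop (𝓝 (F x))) :
    MonotoneOn F (Icc α₀ α₁) := fun x hx y hy hxy =>
  le_of_tendsto_of_tendsto' (hconv x hx) (hconv y hy) fun n => h.monotoneOn n hx hy hxy

theorem mul_exp_le_of_tendsto (h : IsGrowthFamily α₀ α₁ M f f')
    (hconv : ∀ x ∈ Icc α₀ α₁, Tendsto (fun n => f n x) atTop (𝓝 (F x))) {u v : ℝ}
    (hu : u ∈ Icc α₀ α₁) (hv : v ∈ Icc α₀ α₁) (huv : u ≤ v) (hFv : 0 < F v) :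
    F u * exp ((F v)⁻¹ * (v - u)) ≤ F v := by
  have hrate : Tendsto (fun n : ℕ => (n : ℝ) / ∑ k ∈ range n, f k v) atTop (𝓝 (F v)⁻¹) :=
    ((hconv v hv).cesaro.inv₀ hFv.ne').congr fun n => by rw [mul_inv, inv_inv, div_eq_mul_inv]
  refine le_of_tendsto_of_tendsto ((hconv u hu).mul
    ((continuous_exp.tendsto _).comp (hrate.mul_const (v - u)))) (hconv v hv) ?_
  filter_upwards [eventually_ge_atTop 1] with n hn
  have hS := h.sum_range_pos hn hv
  exact h.mul_exp_le hn hu hv huv (by positivity) (div_mul_cancel₀ _ hS.ne').le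

theorem sub_le_sub_mul_one_add (h : IsGrowthFamily α₀ α₁ M f f')
    (hconv : ∀ x ∈ Icc α₀ α₁, Tendsto (fun n => f n x) atTop (𝓝 (F x))) {u v c : ℝ}
    (hu : u ∈ Icc α₀ α₁) (hv : v ∈ Icc α₀ α₁) (huv : u ≤ v) (hc : 0 < c) (hcu : c ≤ F u) :
    v - u ≤ (F v - F u) * (1 + c⁻¹ * (v - u)) := by
  have hFuv := h.monotoneOn_of_tendsto hconv hu hv huv
  have hFv : 0 < F v := by linarith
  have hd : 0 ≤ F v - F u := by linarith
  have key : F u * (v - u) ≤ (F v - F u) * F v := by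
    have := (mul_le_mul_of_nonneg_left (add_one_le_exp ((F v)⁻¹ * (v - u))) (hc.le.trans hcu)).trans
      (h.mul_exp_le_of_tendsto hconv hu hv huv hFv)
    field_simp at this
    nlinarith
  calc v - u ≤ (F v - F u) * (1 + (F v)⁻¹ * (v - u)) := by
        rw [← sub_nonneg]
        have : (F v - F u) * (1 + (F v)⁻¹ * (v - u)) - (v - u)
            = ((F v - F u) * F v - F u * (v - u)) / F v := by field_simp; ring
        rw [this]
        exact div_nonneg (by linarith) hFv.le
    _ ≤ (F v - F u) * (1 + c⁻¹ * (v - u)) := by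
        gcongr
        linarith

theorem sub_le_sub_of_pos (h : IsGrowthFamily α₀ α₁ M f f')
    (hconv : ∀ x ∈ Icc α₀ α₁, Tendsto (fun n => f n x) atTop (𝓝 (F x))) {a b : ℝ}
    (ha : a ∈ Icc α₀ α₁) (hb : b ∈ Icc α₀ α₁) (hab : a < b) (hpos : ∀ x ∈ Ioc a b, 0 < F x) :
    b - a ≤ F b - F a := by
  have hFmono := h.monotoneOn_of_tendsto hconv
  have hmem : ∀ x, a ≤ x → x ≤ b → x ∈ Icc α₀ α₁ := fun x hax hxb =>
    ⟨ha.1.trans hax, hxb.trans hb.2⟩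
  have hx : ∀ x ∈ Ioo a b, b - x ≤ F b - F a := fun x hx => by
    have hxI := hmem x hx.1.le hx.2.le
    have := sub_le_sub_of_forall_sub_le_mul_one_add hx.2.le fun u v hxu huv hvb =>
      h.sub_le_sub_mul_one_add hconv (hmem u (hx.1.le.trans hxu) (huv.trans hvb))
        (hmem v (hx.1.le.trans (hxu.trans huv)) hvb) huv (hpos x ⟨hx.1, hx.2.le⟩)
        (hFmono hxI (hmem u (hx.1.le.trans hxu) (huv.trans hvb)) hxu)
    linarith [hFmono ha hxI hx.1.le]
  exact le_of_tendsto (((continuous_const.sub continuous_id).tendsto a).mono_left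
    nhdsWithin_le_nhds) (eventually_of_mem (Ioo_mem_nhdsGT hab) hx)

end Limit

end IsGrowthFamily

theorem stmt_4_general (α₀ α₁ M : ℝ)
    (f f' : ℕ → ℝ → ℝ) (F : ℝ → ℝ)
    (hderiv : ∀ n, ∀ x ∈ Set.Icc α₀ α₁,
      HasDerivWithinAt (f n) (f' n x) (Set.Icc α₀ α₁) x)
    (hmono : ∀ n, MonotoneOn (f n) (Set.Icc α₀ α₁))
    (hrange : ∀ n, ∀ x ∈ Set.Icc α₀ α₁, f n x ∈ Set.Icc 0 M)
    (hconv : ∀ x ∈ Set.Icc α₀ α₁,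
      Tendsto (fun n => f n x) atTop (nhds (F x)))
    (hf0 : ∀ x ∈ Set.Icc α₀ α₁, 0 < f 0 x)
    (hineq : ∀ n, 1 ≤ n → ∀ x ∈ Set.Icc α₀ α₁,
      f' n x ≥ ((n : ℝ) / (∑ k ∈ Finset.range n, f k x)) * f n x) :
    ∀ β' ∈ Set.Icc α₀ α₁, ∀ β ∈ Set.Icc α₀ α₁, β' < β →
      F β - F β' ≥ (β - β') *
        limsup (fun n : ℕ =>
          Real.log (∑ k ∈ Finset.range n, f k β') / Real.log n) atTop := by
  have h : IsGrowthFamily α₀ α₁ M f f' := ⟨hderiv, hmono, hrange, hf0, hineq⟩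
  intro β' hβ' β hβ hlt
  have hFmono := h.monotoneOn_of_tendsto hconv hβ' hβ hlt.le
  have hsum_ge : ∀ᶠ n in atTop, f 0 β' ≤ ∑ k ∈ range n, f k β' := by
    filter_upwards [eventually_ge_atTop 1] with n hn
    exact single_le_sum (fun k _ => (h.mem_Icc k β' hβ').1) (mem_range.2 hn)
  by_cases hpos : ∀ x ∈ Ioc β' β, 0 < F x
  · have hL : limsup (fun n : ℕ => log (∑ k ∈ range n, f k β') / log n) atTop ≤ 1 :=
      limsup_log_div_log_le (h.pos_zero β' hβ') hsum_ge (C := M) <| .of_forall fun n => by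
        rw [rpow_one, mul_comm]; exact h.sum_range_le n hβ'
    nlinarith [h.sub_le_sub_of_pos hconv hβ' hβ hlt hpos]
  · obtain ⟨w, hβ'w, hwβ, hFw⟩ : ∃ w, β' < w ∧ w ≤ β ∧ F w ≤ 0 := by simpa using hpos
    have hwI : w ∈ Icc α₀ α₁ := ⟨hβ'.1.trans hβ'w.le, hwβ.trans hβ.2⟩
    have hF0 : F w = 0 :=
      le_antisymm hFw (ge_of_tendsto' (hconv w hwI) fun n => (h.mem_Icc n w hwI).1)
    obtain ⟨B, hB⟩ := h.exists_sum_range_le hβ' hwI hβ'w (hF0 ▸ hconv w hwI)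
    have hL : limsup (fun n : ℕ => log (∑ k ∈ range n, f k β') / log n) atTop ≤ 0 :=
      limsup_log_div_log_le (h.pos_zero β' hβ') hsum_ge (C := B) <| .of_forall fun n => by
        simpa using hB n
    nlinarith

/-- Supercritical step of the proof of Lemma 1.2: for `β' < β`,
`f(β) - f(β') ≥ (β - β') · limsup_n (log Σ_n(β') / log n)`. -/
theorem stmt_4 (α₀ α₁ M : ℝ) (hα : α₀ < α₁) (hM : 0 < M)
    (f f' : ℕ → ℝ → ℝ) (F : ℝ → ℝ)
    (hderiv : ∀ n, ∀ x ∈ Set.Icc α₀ α₁,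
      HasDerivWithinAt (f n) (f' n x) (Set.Icc α₀ α₁) x)
    (hmono : ∀ n, MonotoneOn (f n) (Set.Icc α₀ α₁))
    (hrange : ∀ n, ∀ x ∈ Set.Icc α₀ α₁, f n x ∈ Set.Icc 0 M)
    (hconv : ∀ x ∈ Set.Icc α₀ α₁,
      Tendsto (fun n => f n x) atTop (nhds (F x)))
    (hf0 : ∀ x ∈ Set.Icc α₀ α₁, 0 < f 0 x)
    (hineq : ∀ n, 1 ≤ n → ∀ x ∈ Set.Icc α₀ α₁,
      f' n x ≥ ((n : ℝ) / (∑ k ∈ Finset.range n, f k x)) * f n x) :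
    ∀ β' ∈ Set.Icc α₀ α₁, ∀ β ∈ Set.Icc α₀ α₁, β' < β →
      F β - F β' ≥ (β - β') *
        limsup (fun n : ℕ =>
          Real.log (∑ k ∈ Finset.range n, f k β') / Real.log n) atTop :=
  stmt_4_general α₀ α₁ M f f' F hderiv hmono hrange hconv hf0 hineq
end

section
/- Let α₀ < α₁ be real numbers and M > 0. Let (f_n)_{n≥0} be a sequence of differentiable, nondecreasing functions f_n : [α₀, α₁] → [0, M] with f_0(x) > 0 for all x, and set Σ_n := Σ_{k=0}^{n-1} f_k. Assume f_n'(x) ≥ (n / Σ_n(x)) · f_n(x) for all n ≥ 1 and x ∈ [α₀, α₁]. For n ≥ 2 define T_n(x) := (1/log n) · Σ_{i=1}^{n} f_i(x)/i. Then T_n is differentiable and for every x ∈ [α₀, α₁], T_n'(x) ≥ (log Σ_{n+1}(x) − log Σ_1(x)) / log n. -/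
open Filter Real Finset

/-
Writing `Σ_i = ∑_{k<i} f_k(x)`, the step `Σ_i ↦ Σ_{i+1} = Σ_i + f_i(x)` raises the logarithm by at
most `f_i(x) / Σ_i`, since `log t ≤ t - 1`, and the hypothesis on `f_i'` bounds that by `f_i'(x) / i`.
Summing over `1 ≤ i ≤ n` telescopes the logarithms into `log Σ_{n+1} - log Σ_1`.
-/

lemma Real.log_add_sub_log_le_div {s a : ℝ} (hs : 0 < s) (ha : 0 ≤ a) :
    log (s + a) - log s ≤ a / s := by
  have hsa : 0 < s + a := by linarith
  calc log (s + a) - log s = log ((s + a) / s) := (log_div hsa.ne' hs.ne').symm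
    _ ≤ (s + a) / s - 1 := log_le_sub_one_of_pos (by positivity)
    _ = a / s := by field_simp; ring

lemma log_sum_range_succ_sub_log_le (a : ℕ → ℝ) (ha : ∀ k, 0 ≤ a k) (h0 : 0 < a 0) (n : ℕ) :
    log (∑ k ∈ range (n + 1), a k) - log (∑ k ∈ range 1, a k) ≤
      ∑ i ∈ Icc 1 n, a i / ∑ k ∈ range i, a k := by
  rw [← Ico_add_one_right_eq_Icc, ← sum_Ico_sub (fun i ↦ log (∑ k ∈ range i, a k)) (by omega)]
  refine sum_le_sum fun i hi ↦ ?_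
  have hpos : 0 < ∑ k ∈ range i, a k :=
    sum_pos' (fun k _ ↦ ha k) ⟨0, mem_range.2 (by simp at hi; omega), h0⟩
  rw [sum_range_succ]
  exact log_add_sub_log_le_div hpos (ha i)

theorem stmt_7_general (α₀ α₁ M : ℝ)
    (f f' : ℕ → ℝ → ℝ)
    (hderiv : ∀ n, ∀ x ∈ Set.Icc α₀ α₁,
      HasDerivWithinAt (f n) (f' n x) (Set.Icc α₀ α₁) x)
    (hrange : ∀ n, ∀ x ∈ Set.Icc α₀ α₁, f n x ∈ Set.Icc 0 M)
    (hf0 : ∀ x ∈ Set.Icc α₀ α₁, 0 < f 0 x)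
    (hineq : ∀ n, 1 ≤ n → ∀ x ∈ Set.Icc α₀ α₁,
      f' n x ≥ ((n : ℝ) / (∑ k ∈ Finset.range n, f k x)) * f n x) :
    ∀ n : ℕ, 2 ≤ n → ∀ x ∈ Set.Icc α₀ α₁,
      HasDerivWithinAt
        (fun y => (1 / Real.log n) * ∑ i ∈ Finset.Icc 1 n, f i y / i)
        ((1 / Real.log n) * ∑ i ∈ Finset.Icc 1 n, f' i x / i)
        (Set.Icc α₀ α₁) x ∧
      (1 / Real.log n) * ∑ i ∈ Finset.Icc 1 n, f' i x / i ≥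
        (Real.log (∑ k ∈ Finset.range (n + 1), f k x) -
          Real.log (∑ k ∈ Finset.range 1, f k x)) / Real.log n := by
  intro n hn x hx
  refine ⟨(HasDerivWithinAt.fun_sum fun i _ ↦ (hderiv i x hx).div_const i).const_mul _, ?_⟩
  have hlog : 0 < log n := log_pos (by exact_mod_cast hn)
  have hstep : ∀ i ∈ Icc 1 n, f i x / ∑ k ∈ range i, f k x ≤ f' i x / i := by
    intro i hi
    have hi1 : 1 ≤ i := (mem_Icc.1 hi).1
    rw [le_div_iff₀ (by exact_mod_cast hi1)]
    calc f i x / (∑ k ∈ range i, f k x) * i = i / (∑ k ∈ range i, f k x) * f i x := by ring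
      _ ≤ f' i x := hineq i hi1 x hx
  rw [ge_iff_le, one_div_mul_eq_div, div_le_div_iff_of_pos_right hlog]
  exact (log_sum_range_succ_sub_log_le (f · x) (fun k ↦ (hrange k x hx).1) (hf0 x hx) n).trans
    (sum_le_sum hstep)

/-- Differential inequality for `T_n(x) = (1/log n) ∑_{i=1}^n f_i(x)/i`:
`T_n` is differentiable with `T_n'(x) ≥ (log Σ_{n+1}(x) - log Σ_1(x)) / log n`. -/
theorem stmt_7 (α₀ α₁ M : ℝ) (hα : α₀ < α₁) (hM : 0 < M)
    (f f' : ℕ → ℝ → ℝ)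
    (hderiv : ∀ n, ∀ x ∈ Set.Icc α₀ α₁,
      HasDerivWithinAt (f n) (f' n x) (Set.Icc α₀ α₁) x)
    (hmono : ∀ n, MonotoneOn (f n) (Set.Icc α₀ α₁))
    (hrange : ∀ n, ∀ x ∈ Set.Icc α₀ α₁, f n x ∈ Set.Icc 0 M)
    (hf0 : ∀ x ∈ Set.Icc α₀ α₁, 0 < f 0 x)
    (hineq : ∀ n, 1 ≤ n → ∀ x ∈ Set.Icc α₀ α₁,
      f' n x ≥ ((n : ℝ) / (∑ k ∈ Finset.range n, f k x)) * f n x) :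
    ∀ n : ℕ, 2 ≤ n → ∀ x ∈ Set.Icc α₀ α₁,
      HasDerivWithinAt
        (fun y => (1 / Real.log n) * ∑ i ∈ Finset.Icc 1 n, f i y / i)
        ((1 / Real.log n) * ∑ i ∈ Finset.Icc 1 n, f' i x / i)
        (Set.Icc α₀ α₁) x ∧
      (1 / Real.log n) * ∑ i ∈ Finset.Icc 1 n, f' i x / i ≥
        (Real.log (∑ k ∈ Finset.range (n + 1), f k x) -
          Real.log (∑ k ∈ Finset.range 1, f k x)) / Real.log n :=
  stmt_7_general α₀ α₁ M f f' hderiv hrange hf0 hineq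
end

section
/- Let L be a finite distributive lattice and let μ : L → ℝ≥0 be a probability weight (Σ_{a∈L} μ(a) = 1) satisfying the FKG lattice condition μ(a)·μ(b) ≤ μ(a ⊔ b)·μ(a ⊓ b) for all a, b ∈ L. Let A₁, …, A_k ⊆ L be upper sets such that μ(A₁) = μ(A₂) = ⋯ = μ(A_k), where μ(A) := Σ_{a∈A} μ(a). Then μ(A₁) ≥ 1 − (1 − μ(A₁ ∪ ⋯ ∪ A_k))^{1/k}. -/
/-!
Passing to complements, the sets `Bᵢ = Aᵢᶜ` are lower sets of equal mass `1 - μ(A₁)`, and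
`B₁ ∩ ⋯ ∩ B_k` is the complement of `A₁ ∪ ⋯ ∪ A_k`. Harris' inequality for lower sets, a
consequence of the four functions theorem, makes lower sets positively correlated, so
`(1 - μ(A₁))^k = ∏ μ(Bᵢ) ≤ μ(⋂ Bᵢ) = 1 - μ(⋃ Aᵢ)`; taking `k`-th roots gives the claim.
-/

open Real Finset
open scoped FinsetFamily

section Harris

variable {α β : Type*} [DistribLattice α] [Fintype α] [DecidableEq α]
  [CommSemiring β] [LinearOrder β] [IsStrictOrderedRing β] [ExistsAddOfLE β] {μ : α → β}

theorem sum_mul_sum_le_sum_mul_sum_inter_of_isLowerSet (hμ₀ : 0 ≤ μ)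
    (hμ : ∀ a b, μ a * μ b ≤ μ (a ⊔ b) * μ (a ⊓ b)) {s t : Finset α}
    (hs : IsLowerSet (s : Set α)) (ht : IsLowerSet (t : Set α)) :
    (∑ a ∈ s, μ a) * ∑ a ∈ t, μ a ≤ (∑ a, μ a) * ∑ a ∈ s ∩ t, μ a := by
  have hinfs : s ⊼ t ⊆ s ∩ t := infs_subset_iff.2 fun a ha b hb =>
    mem_inter.2 ⟨hs inf_le_left ha, ht inf_le_right hb⟩
  calc (∑ a ∈ s, μ a) * ∑ a ∈ t, μ a
      ≤ (∑ a ∈ s ⊼ t, μ a) * ∑ a ∈ s ⊻ t, μ a :=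
        four_functions_theorem μ μ μ μ hμ₀ hμ₀ hμ₀ hμ₀
          (fun a b => (hμ a b).trans_eq (mul_comm _ _)) s t
    _ ≤ (∑ a ∈ s ∩ t, μ a) * ∑ a, μ a := by
        have hsum_mono {u v : Finset α} (h : u ⊆ v) : ∑ a ∈ u, μ a ≤ ∑ a ∈ v, μ a :=
          sum_le_sum_of_subset_of_nonneg h fun a _ _ => hμ₀ a
        exact mul_le_mul (hsum_mono hinfs) (hsum_mono (subset_univ _))
          (sum_nonneg fun a _ => hμ₀ a) (sum_nonneg fun a _ => hμ₀ a)
    _ = (∑ a, μ a) * ∑ a ∈ s ∩ t, μ a := mul_comm _ _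

theorem prod_sum_le_sum_inf_of_isLowerSet {ι : Type*} [DecidableEq ι] (hμ₀ : 0 ≤ μ)
    (hμ : ∀ a b, μ a * μ b ≤ μ (a ⊔ b) * μ (a ⊓ b)) (hsum : ∑ a, μ a = 1)
    {B : ι → Finset α} (hB : ∀ i, IsLowerSet (B i : Set α)) (s : Finset ι) :
    ∏ i ∈ s, ∑ a ∈ B i, μ a ≤ ∑ a ∈ s.inf B, μ a := by
  induction s using Finset.induction with
  | empty => simp [hsum]
  | insert i s hi ih =>
    have hinf : IsLowerSet ((s.inf B : Finset α) : Set α) := fun a b hba ha => by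
      rw [mem_coe, mem_inf] at ha ⊢
      exact fun j hj => hB j hba (ha j hj)
    calc ∏ j ∈ insert i s, ∑ a ∈ B j, μ a
        = (∑ a ∈ B i, μ a) * ∏ j ∈ s, ∑ a ∈ B j, μ a := prod_insert hi
      _ ≤ (∑ a ∈ B i, μ a) * ∑ a ∈ s.inf B, μ a := by
          gcongr
          exact sum_nonneg fun a _ => hμ₀ a
      _ ≤ ∑ a ∈ B i ∩ s.inf B, μ a := by
          simpa [hsum] using sum_mul_sum_le_sum_mul_sum_inter_of_isLowerSet hμ₀ hμ (hB i) hinf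
      _ = ∑ a ∈ (insert i s).inf B, μ a := by rw [inf_insert, inf_eq_inter]

end Harris

/-- Square-root trick: for an FKG probability weight on a finite distributive
lattice and upper sets `A₁, …, A_k` of equal probability,
`μ(A₁) ≥ 1 - (1 - μ(A₁ ∪ ⋯ ∪ A_k))^{1/k}`. -/
theorem stmt_9 (L : Type*) [DistribLattice L] [Fintype L] [DecidableEq L]
    (μ : L → ℝ) (hμ0 : ∀ a, 0 ≤ μ a) (hsum : ∑ a, μ a = 1)
    (hFKG : ∀ a b, μ a * μ b ≤ μ (a ⊔ b) * μ (a ⊓ b))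
    (k : ℕ) (hk : 1 ≤ k) (A : Fin k → Finset L)
    (hup : ∀ i, ∀ a ∈ A i, ∀ b, a ≤ b → b ∈ A i)
    (heq : ∀ i j, ∑ a ∈ A i, μ a = ∑ a ∈ A j, μ a) :
    ∑ a ∈ A ⟨0, hk⟩, μ a ≥
      1 - (1 - ∑ a ∈ Finset.univ.biUnion A, μ a) ^ ((1 : ℝ) / k) := by
  have hcompl (s : Finset L) : ∑ a ∈ sᶜ, μ a = 1 - ∑ a ∈ s, μ a := by
    rw [← hsum, ← sum_add_sum_compl s μ, add_sub_cancel_left]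
  have hlower (i : Fin k) : IsLowerSet (((A i)ᶜ : Finset L) : Set L) := fun a b hba ha => by
    rw [mem_coe, mem_compl] at ha ⊢
    exact fun hb => ha (hup i b hb a hba)
  have hinter : univ.inf (fun i => (A i)ᶜ) = (univ.biUnion A)ᶜ := by
    ext a
    simp [mem_inf]
  set x := 1 - ∑ a ∈ A ⟨0, hk⟩, μ a with hx
  have hx₀ : 0 ≤ x := by
    rw [hx, ← hcompl]
    exact sum_nonneg fun a _ => hμ0 a
  have hpow : x ^ k ≤ 1 - ∑ a ∈ univ.biUnion A, μ a := by
    have := prod_sum_le_sum_inf_of_isLowerSet (fun a => hμ0 a) hFKG hsum hlower univ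
    simpa [hcompl, hinter, heq _ ⟨0, hk⟩] using this
  have hroot : x ≤ (1 - ∑ a ∈ univ.biUnion A, μ a) ^ ((1 : ℝ) / k) := by
    rw [one_div, ← pow_rpow_inv_natCast hx₀ (by omega : k ≠ 0)]
    exact rpow_le_rpow (pow_nonneg hx₀ k) hpow (by positivity)
  linarith
end

section
/- Let L be a finite distributive lattice and let μ : L → ℝ≥0 be a probability weight (Σ_{a∈L} μ(a) = 1) satisfying the FKG lattice condition μ(a)·μ(b) ≤ μ(a ⊔ b)·μ(a ⊓ b) for all a, b ∈ L. If A ⊆ L is an upper set and B ⊆ L is a lower set, then μ(A ∩ B) ≤ μ(A)·μ(B). -/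
/-!
For upper sets `A`, `C` the FKG inequality applied to their (monotone) indicator functions gives
Harris' inequality `μ(A) μ(C) ≤ μ(L) μ(A ∩ C)`. The complement of a lower set `B` is an upper
set, and substituting `μ(Bᶜ) = μ(L) - μ(B)` and `μ(A ∩ Bᶜ) = μ(A) - μ(A ∩ B)` into Harris'
inequality for `A` and `Bᶜ` reverses it.
-/

open Finset

section

variable {α β : Type*}

lemma IsUpperSet.monotone_indicator_one [Preorder α] [Preorder β] [Zero β] [One β]
    [ZeroLEOneClass β] {s : Set α} (hs : IsUpperSet s) : Monotone (s.indicator (1 : α → β)) := by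
  intro a b hab
  by_cases ha : a ∈ s
  · rw [Set.indicator_of_mem ha, Set.indicator_of_mem (hs hab ha), Pi.one_apply, Pi.one_apply]
  · rw [Set.indicator_of_notMem ha]
    exact Set.indicator_nonneg (fun _ _ ↦ zero_le_one) b

lemma Finset.sum_mul_indicator_one [Fintype α] [NonAssocSemiring β] (μ : α → β) (s : Finset α) :
    ∑ a, μ a * (s : Set α).indicator 1 a = ∑ a ∈ s, μ a := by
  simp_rw [← Set.indicator_mul_right, Pi.one_apply, mul_one]
  exact sum_indicator_subset μ (subset_univ s)

section DistribLattice

variable [DistribLattice α] [Fintype α] [DecidableEq α]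

theorem fkg_isUpperSet_isUpperSet [CommSemiring β] [LinearOrder β] [IsStrictOrderedRing β]
    [ExistsAddOfLE β] {μ : α → β} (hμ₀ : 0 ≤ μ)
    (hμ : ∀ a b, μ a * μ b ≤ μ (a ⊓ b) * μ (a ⊔ b)) {s t : Finset α}
    (hs : IsUpperSet (s : Set α)) (ht : IsUpperSet (t : Set α)) :
    (∑ a ∈ s, μ a) * ∑ a ∈ t, μ a ≤ (∑ a, μ a) * ∑ a ∈ s ∩ t, μ a := by
  have hst : ∀ a, (s : Set α).indicator (1 : α → β) a * (t : Set α).indicator 1 a =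
      ((s ∩ t : Finset α) : Set α).indicator 1 a := fun a ↦ by
    rw [coe_inter, Set.inter_indicator_one, Pi.mul_apply]
  have h := fkg ((s : Set α).indicator 1) ((t : Set α).indicator 1) μ hμ₀
    (Set.indicator_nonneg fun _ _ ↦ zero_le_one) (Set.indicator_nonneg fun _ _ ↦ zero_le_one)
    hs.monotone_indicator_one ht.monotone_indicator_one hμ
  simpa only [hst, sum_mul_indicator_one] using h

theorem fkg_isUpperSet_isLowerSet [CommRing β] [LinearOrder β] [IsStrictOrderedRing β]
    {μ : α → β} (hμ₀ : 0 ≤ μ) (hμ : ∀ a b, μ a * μ b ≤ μ (a ⊓ b) * μ (a ⊔ b)) {s t : Finset α}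
    (hs : IsUpperSet (s : Set α)) (ht : IsLowerSet (t : Set α)) :
    (∑ a, μ a) * ∑ a ∈ s ∩ t, μ a ≤ (∑ a ∈ s, μ a) * ∑ a ∈ t, μ a := by
  have h := fkg_isUpperSet_isUpperSet hμ₀ hμ hs (t := tᶜ) (by simpa using ht.compl)
  have hcompl : ∑ a ∈ tᶜ, μ a = ∑ a, μ a - ∑ a ∈ t, μ a := by
    rw [← sum_compl_add_sum t, add_sub_cancel_right]
  have hdiff : ∑ a ∈ s ∩ tᶜ, μ a = ∑ a ∈ s, μ a - ∑ a ∈ s ∩ t, μ a := by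
    rw [← sum_inter_add_sum_sdiff s t, ← sdiff_eq_inter_compl, add_sub_cancel_left]
  rw [hcompl, hdiff] at h
  linarith

end DistribLattice

end

/-- FKG inequality (negative correlation form): for an FKG probability weight
on a finite distributive lattice, an upper set `A` and a lower set `B`,
`μ(A ∩ B) ≤ μ(A) μ(B)`. -/
theorem stmt_10 (L : Type*) [DistribLattice L] [Fintype L] [DecidableEq L]
    (μ : L → ℝ) (hμ0 : ∀ a, 0 ≤ μ a) (hsum : ∑ a, μ a = 1)
    (hFKG : ∀ a b, μ a * μ b ≤ μ (a ⊔ b) * μ (a ⊓ b))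
    (A B : Finset L)
    (hA : ∀ a ∈ A, ∀ b, a ≤ b → b ∈ A)
    (hB : ∀ b ∈ B, ∀ a, a ≤ b → a ∈ B) :
    ∑ x ∈ A ∩ B, μ x ≤ (∑ x ∈ A, μ x) * (∑ x ∈ B, μ x) := by
  have h := fkg_isUpperSet_isLowerSet hμ0 (fun a b ↦ (hFKG a b).trans_eq (mul_comm _ _))
    (s := A) (t := B) (fun a b hab ha ↦ hA a ha b hab) (fun b a hab hb ↦ hB b hb a hab)
  rwa [hsum, one_mul] at h
end
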